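/- arXiv:1302.1634 — 3 statements merged into one kernel-verified Lean document; each statement's English description precedes it below -/
import Mathlib

section
/- For any two graphons U and W and any finite simple graph F, |t(F,U) − t(F,W)| ≤ e(F) · ‖U − W‖_□, where e(F) is the number of edges of F. -/
open MeasureTheory Finset
open scoped unitInterval

noncomputable section

/-- The cut norm of a kernel `W : [0,1]² → ℝ`, in its functional form:
`‖W‖_□ = sup_{u,v : [0,1] → [0,1]} |∫ W(x,y) u(x) v(y)|`. -/
def cutNorm (W : I → I → ℝ) : ℝ :=
  sSup {r : ℝ | ∃ u v : I → ℝ, Measurable u ∧ Measurable v ∧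
      (∀ t, u t ∈ Set.Icc (0:ℝ) 1) ∧ (∀ t, v t ∈ Set.Icc (0:ℝ) 1) ∧
      r = |∫ p : I × I, W p.1 p.2 * u p.1 * v p.2|}

/-- Homomorphism density of a finite simple graph `G` on `Fin n` in a kernel `W`. -/
def homDensity {n : ℕ} (G : SimpleGraph (Fin n)) [DecidableRel G.Adj]
    (W : I → I → ℝ) : ℝ :=
  ∫ x : Fin n → I,
    ∏ p ∈ Finset.univ.filter (fun p : Fin n × Fin n => p.1 < p.2 ∧ G.Adj p.1 p.2),
      W (x p.1) (x p.2)

/-- A graphon: symmetric, measurable, `[0,1]`-valued. -/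
def IsGraphon (W : I → I → ℝ) : Prop :=
  Measurable (fun p : I × I => W p.1 p.2) ∧ (∀ x y, W x y = W y x) ∧
    ∀ x y, W x y ∈ Set.Icc (0:ℝ) 1

/-! Replacing the factors `U` of `t(F, U)` by `W` one edge at a time writes
`t(F, U) - t(F, W)` as a sum over the edges `ij` of integrals of `(U - W)(x_i, x_j)` against a
product of the other edge factors. Once all coordinates other than `x_i, x_j` are fixed, every
other factor depends on at most one of `x_i, x_j`, because `F` is simple, so the inner double
integral is `∫ (U - W)(s, t) u(s) v(t)` with `u, v : [0,1] → [0,1]`, at most `‖U - W‖_□`. -/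

open Function

theorem MeasureTheory.measurePreserving_update {ι : Type*} [Fintype ι] [DecidableEq ι]
    {α : ι → Type*} [∀ i, MeasurableSpace (α i)] (μ : ∀ i, Measure (α i))
    [∀ i, SigmaFinite (μ i)] (i : ι) [IsProbabilityMeasure (μ i)] :
    MeasurePreserving (fun q : (∀ j, α j) × α i => update q.1 i q.2)
      ((Measure.pi μ).prod (μ i)) (Measure.pi μ) := by
  refine ⟨measurable_update', (Measure.pi_eq fun s hs => ?_).symm⟩
  have hpre : (fun q : (∀ j, α j) × α i => update q.1 i q.2) ⁻¹' Set.univ.pi s =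
      Set.univ.pi (update s i Set.univ) ×ˢ s i := by
    ext ⟨x, y⟩
    simp only [Set.mem_preimage, Set.mem_pi, Set.mem_univ, true_implies, Set.mem_prod]
    refine ⟨fun h => ⟨fun j => ?_, by simpa using h i⟩, fun ⟨h, hy⟩ j => ?_⟩
    · rcases eq_or_ne j i with rfl | hj
      · simp
      · simpa [hj] using h j
    · rcases eq_or_ne j i with rfl | hj
      · simpa using hy
      · simpa [hj] using h j
  rw [Measure.map_apply measurable_update' (MeasurableSet.univ_pi hs), hpre,
    Measure.prod_prod, Measure.pi_pi, ← Finset.prod_erase_mul _ _ (Finset.mem_univ i),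
    ← Finset.prod_erase_mul _ _ (Finset.mem_univ i)]
  simp only [update_self, measure_univ, mul_one]
  congr 1
  exact Finset.prod_congr rfl fun j hj => by rw [update_of_ne (Finset.ne_of_mem_erase hj)]

theorem MeasureTheory.measurePreserving_update_update {ι : Type*} [Fintype ι] [DecidableEq ι]
    {X : Type*} [MeasureSpace X] [IsProbabilityMeasure (volume : Measure X)] (a b : ι) :
    MeasurePreserving (fun q : (ι → X) × (X × X) => update (update q.1 a q.2.1) b q.2.2) := by
  have hupdate (i : ι) := measurePreserving_update (fun _ : ι => (volume : Measure X)) i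
  exact ((hupdate b).comp ((hupdate a).prod (MeasurePreserving.id volume))).comp
    (MeasurePreserving.symm _ (measurePreserving_prodAssoc volume volume volume))

theorem MeasureTheory.abs_integral_le_of_forall_abs_le {α : Type*} [MeasurableSpace α]
    {μ : Measure α} [IsProbabilityMeasure μ] {f : α → ℝ} {C : ℝ} (h : ∀ x, |f x| ≤ C) :
    |∫ x, f x ∂μ| ≤ C := by
  simpa using norm_integral_le_of_norm_le_const (μ := μ) (f := f) (ae_of_all _ h)

theorem abs_mul_le_of_mem_Icc {d a C : ℝ} (hd : |d| ≤ C) (ha : a ∈ Set.Icc (0:ℝ) 1) :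
    |d * a| ≤ C := by
  rw [abs_mul, abs_of_nonneg ha.1]
  exact (mul_le_of_le_one_right (abs_nonneg d) ha.2).trans hd

theorem Sym2.injOn_mk_setOf_lt {α : Type*} [LinearOrder α] :
    Set.InjOn (fun p : α × α => s(p.1, p.2)) {p | p.1 < p.2} := by
  rintro ⟨a, b⟩ hab ⟨c, d⟩ hcd h
  rcases Sym2.eq_iff.mp h with ⟨rfl, rfl⟩ | ⟨rfl, rfl⟩
  · rfl
  · exact (lt_asymm hab hcd).elim

section cutNorm

variable {D : I → I → ℝ} {C : ℝ}

theorem cutNorm_nonneg (D : I → I → ℝ) : 0 ≤ cutNorm D :=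
  Real.sSup_nonneg <| by
    rintro r ⟨u, v, -, -, -, -, rfl⟩
    exact abs_nonneg _

theorem abs_integral_mul_mul_le_cutNorm (hDC : ∀ s t, |D s t| ≤ C) {u v : I → ℝ}
    (hu : Measurable u) (hv : Measurable v) (hu1 : ∀ s, u s ∈ Set.Icc (0:ℝ) 1)
    (hv1 : ∀ t, v t ∈ Set.Icc (0:ℝ) 1) :
    |∫ q : I × I, D q.1 q.2 * u q.1 * v q.2| ≤ cutNorm D := by
  refine le_csSup ⟨C, ?_⟩ ⟨u, v, hu, hv, hu1, hv1, rfl⟩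
  rintro r ⟨u, v, -, -, hu1, hv1, rfl⟩
  exact abs_integral_le_of_forall_abs_le fun q =>
    abs_mul_le_of_mem_Icc (abs_mul_le_of_mem_Icc (hDC ..) (hu1 q.1)) (hv1 q.2)

end cutNorm

def IsUnitKernel (K : I → I → ℝ) : Prop :=
  Measurable (uncurry K) ∧ ∀ s t, K s t ∈ Set.Icc (0:ℝ) 1

theorem IsGraphon.isUnitKernel {W : I → I → ℝ} (hW : IsGraphon W) : IsUnitKernel W :=
  ⟨hW.1, hW.2.2⟩

def edgeProduct {ι : Type*} (S : Finset (ι × ι)) (K : ι × ι → I → I → ℝ) (x : ι → I) : ℝ :=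
  ∏ p ∈ S, K p (x p.1) (x p.2)

section edgeProduct

variable {ι : Type*} {S E : Finset (ι × ι)} {K : ι × ι → I → I → ℝ}

theorem measurable_edgeProduct (hK : ∀ p ∈ S, Measurable (uncurry (K p))) :
    Measurable (edgeProduct S K) :=
  Finset.measurable_prod _ fun p hp =>
    (hK p hp).comp (by fun_prop : Measurable fun x : ι → I => (x p.1, x p.2))

theorem edgeProduct_mem_Icc (hK : ∀ p ∈ S, ∀ s t, K p s t ∈ Set.Icc (0:ℝ) 1) (x : ι → I) :
    edgeProduct S K x ∈ Set.Icc (0:ℝ) 1 :=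
  ⟨Finset.prod_nonneg fun p hp => (hK p hp _ _).1,
    Finset.prod_le_one (fun p hp => (hK p hp _ _).1) fun p hp => (hK p hp _ _).2⟩

theorem edgeProduct_update_update [DecidableEq ι] {a b : ι} (hab : a ≠ b)
    (hS : ∀ p ∈ S, s(p.1, p.2) ≠ s(a, b)) (x : ι → I) (s t : I) :
    edgeProduct S K (update (update x a s) b t) =
      edgeProduct {p ∈ S | b ∈ s(p.1, p.2)} K (update x b t) *
        edgeProduct {p ∈ S | b ∉ s(p.1, p.2)} K (update x a s) := by
  rw [edgeProduct, ← Finset.prod_filter_mul_prod_filter_not S (fun p => b ∈ s(p.1, p.2))]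
  congr 1
  · refine Finset.prod_congr rfl fun p hp => ?_
    obtain ⟨hpS, hpb⟩ := Finset.mem_filter.mp hp
    have hpa : a ∉ s(p.1, p.2) := fun hpa =>
      hS p hpS ((Sym2.mem_and_mem_iff hab).mp ⟨hpa, hpb⟩)
    rw [Sym2.mem_iff, not_or] at hpa
    rw [update_comm hab, update_of_ne (Ne.symm hpa.1), update_of_ne (Ne.symm hpa.2)]
  · refine Finset.prod_congr rfl fun p hp => ?_
    have hpb := (Finset.mem_filter.mp hp).2
    rw [Sym2.mem_iff, not_or] at hpb
    rw [update_of_ne (Ne.symm hpb.1), update_of_ne (Ne.symm hpb.2)]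

theorem integrable_edgeProduct [Fintype ι] (hK : ∀ p ∈ S, IsUnitKernel (K p)) :
    Integrable (edgeProduct S K) :=
  Integrable.of_bound (measurable_edgeProduct fun p hp => (hK p hp).1).aestronglyMeasurable 1
    (ae_of_all _ fun x => by
      have hx := edgeProduct_mem_Icc (fun p hp => (hK p hp).2) x
      rw [Real.norm_eq_abs, abs_of_nonneg hx.1]
      exact hx.2)

theorem abs_integral_mul_edgeProduct_le_cutNorm [Fintype ι] [DecidableEq ι]
    {a b : ι} (hab : a ≠ b) {D : I → I → ℝ} {C : ℝ} (hDm : Measurable (uncurry D))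
    (hDC : ∀ s t, |D s t| ≤ C) (hK : ∀ p ∈ S, IsUnitKernel (K p)) (hS : ∀ p ∈ S, s(p.1, p.2) ≠ s(a, b)) :
    |∫ x : ι → I, D (x a) (x b) * edgeProduct S K x| ≤ cutNorm D := by
  set f : (ι → I) → ℝ := fun x => D (x a) (x b) * edgeProduct S K x
  have hfm : Measurable f :=
    (hDm.comp (by fun_prop : Measurable fun x : ι → I => (x a, x b))).mul
      (measurable_edgeProduct fun p hp => (hK p hp).1)
  have hfC (x) : |f x| ≤ C := abs_mul_le_of_mem_Icc (hDC ..)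
    (edgeProduct_mem_Icc (fun p hp => (hK p hp).2) x)
  set Φ : (ι → I) × (I × I) → ι → I := fun q => update (update q.1 a q.2.1) b q.2.2
  have hΦ : MeasurePreserving Φ := measurePreserving_update_update a b
  have hfΦ : Integrable (fun q => f (Φ q)) (volume.prod volume) :=
    Integrable.of_bound (hfm.comp hΦ.measurable).aestronglyMeasurable C
      (ae_of_all _ fun q => hfC _)
  rw [← hΦ.map_eq, integral_map hΦ.measurable.aemeasurable hfm.aestronglyMeasurable,
    Measure.volume_eq_prod, integral_prod _ hfΦ]
  refine abs_integral_le_of_forall_abs_le fun x => ?_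
  set u : I → ℝ := edgeProduct {p ∈ S | b ∉ s(p.1, p.2)} K ∘ update x a
  set v : I → ℝ := edgeProduct {p ∈ S | b ∈ s(p.1, p.2)} K ∘ update x b
  have hsplit (q : I × I) : f (Φ (x, q)) = D q.1 q.2 * u q.1 * v q.2 := by
    simp only [f, Φ, u, v, comp_apply, update_self, update_of_ne hab,
      edgeProduct_update_update hab hS]
    ring
  simp_rw [hsplit]
  exact abs_integral_mul_mul_le_cutNorm hDC
    ((measurable_edgeProduct fun p hp => (hK p (Finset.mem_filter.mp hp).1).1).comp
      (measurable_update x))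
    ((measurable_edgeProduct fun p hp => (hK p (Finset.mem_filter.mp hp).1).1).comp
      (measurable_update x))
    (fun s => edgeProduct_mem_Icc (fun p hp => (hK p (Finset.mem_filter.mp hp).1).2) _)
    (fun t => edgeProduct_mem_Icc (fun p hp => (hK p (Finset.mem_filter.mp hp).1).2) _)

theorem isUnitKernel_update [DecidableEq ι] (hK : ∀ p ∈ E, IsUnitKernel (K p)) {e : ι × ι}
    {L : I → I → ℝ} (hL : IsUnitKernel L) : ∀ p ∈ E, IsUnitKernel (update K e L p) := by
  intro p hp
  rcases eq_or_ne p e with rfl | hpe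
  · rwa [update_self]
  · rw [update_of_ne hpe]; exact hK p hp

theorem abs_integral_edgeProduct_sub_update_le [Fintype ι] [DecidableEq ι]
    (hE : ∀ p ∈ E, p.1 ≠ p.2) (hinj : Set.InjOn (fun p : ι × ι => s(p.1, p.2)) E)
    {e : ι × ι} (he : e ∈ E) (hK : ∀ p ∈ E, IsUnitKernel (K p))
    {L : I → I → ℝ} (hL : IsUnitKernel L) :
    |(∫ x, edgeProduct E K x) - ∫ x, edgeProduct E (update K e L) x| ≤
      cutNorm fun s t => K e s t - L s t := by
  have hdiff (x : ι → I) : edgeProduct E K x - edgeProduct E (update K e L) x =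
      (K e (x e.1) (x e.2) - L (x e.1) (x e.2)) * edgeProduct (E.erase e) K x := by
    have hrest : ∏ p ∈ E.erase e, update K e L p (x p.1) (x p.2) =
        edgeProduct (E.erase e) K x :=
      Finset.prod_congr rfl fun p hp => by rw [update_of_ne (Finset.ne_of_mem_erase hp)]
    rw [edgeProduct, edgeProduct, ← Finset.mul_prod_erase E _ he,
      ← Finset.mul_prod_erase E _ he, update_self, hrest, edgeProduct]
    ring
  rw [← integral_sub (integrable_edgeProduct hK)
    (integrable_edgeProduct (isUnitKernel_update hK hL))]
  simp_rw [hdiff]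
  refine abs_integral_mul_edgeProduct_le_cutNorm (D := fun s t => K e s t - L s t) (hE e he)
    ((hK e he).1.sub hL.1)
    (fun s t => abs_sub_le_of_nonneg_of_le ((hK e he).2 s t).1 ((hK e he).2 s t).2
      (hL.2 s t).1 (hL.2 s t).2)
    (fun p hp => hK p (Finset.mem_of_mem_erase hp)) fun p hp h => ?_
  exact Finset.ne_of_mem_erase hp (hinj (Finset.mem_of_mem_erase hp) he h)

theorem abs_integral_edgeProduct_sub_le_sum [Fintype ι] [DecidableEq ι]
    (hE : ∀ p ∈ E, p.1 ≠ p.2) (hinj : Set.InjOn (fun p : ι × ι => s(p.1, p.2)) E)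
    {L : ι × ι → I → I → ℝ} (hK : ∀ p ∈ E, IsUnitKernel (K p)) (hL : ∀ p ∈ E, IsUnitKernel (L p)) :
    |(∫ x, edgeProduct E K x) - ∫ x, edgeProduct E L x| ≤
      ∑ p ∈ E, cutNorm fun s t => K p s t - L p s t := by
  suffices ∀ S ⊆ E, ∀ K : ι × ι → I → I → ℝ, (∀ p ∈ E, IsUnitKernel (K p)) →
      (∀ p ∈ E, p ∉ S → K p = L p) →
      |(∫ x, edgeProduct E K x) - ∫ x, edgeProduct E L x| ≤
        ∑ p ∈ S, cutNorm fun s t => K p s t - L p s t from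
    this E subset_rfl K hK fun p hp hpE => (hpE hp).elim
  intro S
  induction S using Finset.induction_on with
  | empty =>
    intro _ K _ hKL
    have hKL' : edgeProduct E K = edgeProduct E L :=
      funext fun x => Finset.prod_congr rfl fun p hp => by rw [hKL p hp (Finset.notMem_empty p)]
    simp [hKL']
  | @insert e S he ih =>
    intro hSE K hK hKL
    have heE := hSE (Finset.mem_insert_self e S)
    set K' := update K e (L e) with hK'
    have hK'L : ∀ p ∈ E, p ∉ S → K' p = L p := by
      intro p hp hpS
      rcases eq_or_ne p e with rfl | hpe
      · exact update_self ..
      · rw [hK', update_of_ne hpe]; exact hKL p hp (by simp [hpe, hpS])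
    calc |(∫ x, edgeProduct E K x) - ∫ x, edgeProduct E L x|
        ≤ |(∫ x, edgeProduct E K x) - ∫ x, edgeProduct E K' x| +
            |(∫ x, edgeProduct E K' x) - ∫ x, edgeProduct E L x| := abs_sub_le _ _ _
      _ ≤ (cutNorm fun s t => K e s t - L e s t) +
            ∑ p ∈ S, cutNorm fun s t => K' p s t - L p s t :=
          add_le_add (abs_integral_edgeProduct_sub_update_le hE hinj heE hK (hL e heE))
            (ih ((Finset.subset_insert e S).trans hSE) K' (isUnitKernel_update hK (hL e heE))
              hK'L)
      _ = ∑ p ∈ insert e S, cutNorm fun s t => K p s t - L p s t := by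
          rw [Finset.sum_insert he]
          refine congrArg _ (Finset.sum_congr rfl fun p hp => ?_)
          rw [hK', update_of_ne (ne_of_mem_of_not_mem hp he)]

end edgeProduct

/-- Counting lemma: for graphons `U`, `W` and any finite simple graph `F`,
`|t(F,U) − t(F,W)| ≤ e(F) · ‖U − W‖_□`. -/
theorem counting_lemma_graphons {n : ℕ} (F : SimpleGraph (Fin n)) [DecidableRel F.Adj]
    (U W : I → I → ℝ) (hU : IsGraphon U) (hW : IsGraphon W) :
    |homDensity F U - homDensity F W| ≤
      (F.edgeFinset.card : ℝ) * cutNorm (fun x y => U x y - W x y) := by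
  set E := Finset.univ.filter fun p : Fin n × Fin n => p.1 < p.2 ∧ F.Adj p.1 p.2
  have hlt : ∀ p ∈ E, p.1 < p.2 := fun p hp => (Finset.mem_filter.mp hp).2.1
  have hinj : Set.InjOn (fun p : Fin n × Fin n => s(p.1, p.2)) E :=
    Sym2.injOn_mk_setOf_lt.mono hlt
  have hcard : E.card ≤ F.edgeFinset.card :=
    Finset.card_le_card_of_injOn _
      (fun p hp => SimpleGraph.mem_edgeFinset.mpr (Finset.mem_filter.mp hp).2.2) hinj
  calc |homDensity F U - homDensity F W|
      ≤ ∑ _p ∈ E, cutNorm fun x y => U x y - W x y :=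
        abs_integral_edgeProduct_sub_le_sum (fun p hp => (hlt p hp).ne) hinj
          (fun _ _ => hU.isUnitKernel) fun _ _ => hW.isUnitKernel
    _ = E.card * cutNorm fun x y => U x y - W x y := by rw [Finset.sum_const, nsmul_eq_mul]
    _ ≤ F.edgeFinset.card * cutNorm fun x y => U x y - W x y :=
        mul_le_mul_of_nonneg_right (by exact_mod_cast hcard) (cutNorm_nonneg _)

end
end

section
/- Weak regularity lemma (Frieze–Kannan, analytic form): For every ε > 0 and every symmetric measurable function W : [0,1]² → [0,1], there exists a measurable partition Q of [0,1] into at most 2^{2/ε²} parts such that ‖W − W_Q‖_□ ≤ ε. -/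
open MeasureTheory Finset
open scoped unitInterval

noncomputable section

/-- A finite measurable partition of `[0,1]`. -/
def IsPartition {ι : Type*} (Q : ι → Set I) : Prop :=
  (∀ i, MeasurableSet (Q i)) ∧ Pairwise (Function.onFun Disjoint Q) ∧
    (⋃ i, Q i) = Set.univ

/-- The average of `W` over the product cell `Q i × Q j` (with value `0` on
cells of measure zero). -/
def cellAvg {ι : Type*} (W : I → I → ℝ) (Q : ι → Set I) (i j : ι) : ℝ :=
  if volume (Q i ×ˢ Q j) = 0 then 0
  else (∫ p : I × I in Q i ×ˢ Q j, W p.1 p.2) / (volume (Q i ×ˢ Q j)).toReal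

/-- The stepping `W_Q` of `W` with respect to the partition `Q`: on each product
cell `Q i × Q j` it takes the average value of `W` over that cell. -/
def stepFn {ι : Type*} [Fintype ι] (W : I → I → ℝ) (Q : ι → Set I) (x y : I) : ℝ :=
  ∑ i : ι, ∑ j : ι, Set.indicator (Q i ×ˢ Q j) (fun _ => cellAvg W Q i j) (x, y)

/-- The cut norm in its set form: `‖U‖_□ = sup_{S,T} |∫_{S×T} U|`. -/
def cutNormSets (U : I → I → ℝ) : ℝ :=
  sSup {r : ℝ | ∃ S T : Set I, MeasurableSet S ∧ MeasurableSet T ∧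
      r = |∫ p : I × I in S ×ˢ T, U p.1 p.2|}

/-! The stepping `W_Q` is the conditional expectation of `W` given the product cells of `Q`,
so for a refinement `Q'` of `Q` the increment `W_{Q'} - W_Q` is orthogonal to `W_Q` and the
energy `‖W_Q‖₂²` grows by `‖W_{Q'} - W_Q‖₂²`. If `|∫_{S×T} (W - W_Q)| > ε`, refine `Q` by
`S` and `T`: since `S × T` is a union of cells of the refinement, `∫_{S×T} (W_{Q'} - W_Q)`
equals that integral, and Cauchy–Schwarz gives an energy gain above `ε²`. The energy stays
in `[0, 1]`, so after at most `⌊ε⁻²⌋` refinements, each multiplying the number of parts by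
at most `4`, the cut norm is at most `ε`. -/

section Partition

variable {ι κ : Type*} {Q : ι → Set I}

theorem IsPartition.exists_mem (hQ : IsPartition Q) (x : I) : ∃ i, x ∈ Q i :=
  Set.mem_iUnion.1 (hQ.2.2 ▸ Set.mem_univ x)

theorem IsPartition.pairwise_disjoint_prod (hQ : IsPartition Q) :
    Pairwise (Function.onFun Disjoint fun c : ι × ι => Q c.1 ×ˢ Q c.2) := by
  rintro ⟨i, j⟩ ⟨i', j'⟩ hne
  by_cases hi : i = i'
  · subst hi
    exact Set.disjoint_prod.2 (Or.inr (hQ.2.1 fun hj => hne (congrArg _ hj)))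
  · exact Set.disjoint_prod.2 (Or.inl (hQ.2.1 hi))

theorem IsPartition.comp_equiv (hQ : IsPartition Q) (e : κ ≃ ι) : IsPartition (Q ∘ e) :=
  ⟨fun k => hQ.1 (e k), fun _ _ h => hQ.2.1 (e.injective.ne h),
    (e.surjective.iUnion_comp Q).trans hQ.2.2⟩

theorem isPartition_const_univ (ι : Type*) [Subsingleton ι] [Nonempty ι] :
    IsPartition fun _ : ι => (Set.univ : Set I) :=
  ⟨fun _ => .univ, Subsingleton.pairwise, Set.iUnion_const _⟩

end Partition

namespace WeakRegularity

section Refinement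

variable {ι κ ν : Type*} {Q : ι → Set I} {Q' : κ → Set I} {A S : Set I}

def IsUnionOfCells (Q : ι → Set I) (A : Set I) : Prop :=
  ∃ s : Finset ι, A = ⋃ i ∈ s, Q i

def Refines (Q' : κ → Set I) (Q : ι → Set I) : Prop :=
  ∀ i, IsUnionOfCells Q' (Q i)

theorem IsUnionOfCells.of_refines (hA : IsUnionOfCells Q A) (h : Refines Q' Q) :
    IsUnionOfCells Q' A := by
  classical
  obtain ⟨s, rfl⟩ := hA
  choose t ht using h
  refine ⟨s.biUnion t, ?_⟩
  rw [Finset.set_biUnion_biUnion]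
  exact Set.iUnion₂_congr fun i _ => ht i

theorem Refines.trans {Q'' : ν → Set I} (h : Refines Q' Q) (h' : Refines Q'' Q') :
    Refines Q'' Q :=
  fun i => (h i).of_refines h'

def refineBy (Q : ι → Set I) (S : Set I) : ι × Bool → Set I :=
  fun c => Q c.1 ∩ if c.2 then S else Sᶜ

theorem _root_.IsPartition.refineBy (hQ : IsPartition Q) (hS : MeasurableSet S) :
    IsPartition (refineBy Q S) := by
  refine ⟨fun c => (hQ.1 c.1).inter ?_, ?_, ?_⟩
  · cases c.2
    exacts [hS.compl, hS]
  · rintro ⟨i, b⟩ ⟨i', b'⟩ hne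
    by_cases hi : i = i'
    · subst hi
      have hb : b ≠ b' := fun hb => hne (by rw [hb])
      refine Disjoint.mono Set.inter_subset_right Set.inter_subset_right ?_
      cases b <;> cases b' <;> simp_all [disjoint_compl_left, disjoint_compl_right]
    · exact (hQ.2.1 hi).mono Set.inter_subset_left Set.inter_subset_left
  · refine Set.eq_univ_iff_forall.2 fun x => Set.mem_iUnion.2 ?_
    obtain ⟨i, hi⟩ := hQ.exists_mem x
    by_cases hx : x ∈ S
    · exact ⟨(i, true), hi, by simpa using hx⟩
    · exact ⟨(i, false), hi, by simpa using hx⟩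

theorem refines_refineBy (Q : ι → Set I) (S : Set I) : Refines (refineBy Q S) Q := by
  classical
  refine fun i => ⟨{(i, true), (i, false)}, ?_⟩
  simp [refineBy, Set.inter_union_compl]

theorem isUnionOfCells_refineBy [Fintype ι] (hQ : IsPartition Q) (S : Set I) :
    IsUnionOfCells (refineBy Q S) S := by
  refine ⟨univ ×ˢ {true}, Set.ext fun x => ?_⟩
  obtain ⟨i, hi⟩ := hQ.exists_mem x
  simp only [refineBy, Set.mem_iUnion, Finset.mem_product, Finset.mem_univ,
    Finset.mem_singleton, true_and]
  exact ⟨fun hx => ⟨(i, true), rfl, hi, by simpa using hx⟩,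
    fun ⟨c, hc, hxc⟩ => by simpa [hc] using hxc.2⟩

end Refinement

section Integral

variable {ι κ : Type*} {Q : ι → Set I} {W : I → I → ℝ}

theorem setIntegral_biUnion_prod_biUnion (hQ : IsPartition Q) {f : I × I → ℝ}
    (hf : Integrable f) (s t : Finset ι) :
    ∫ p in (⋃ i ∈ s, Q i) ×ˢ (⋃ j ∈ t, Q j), f p
      = ∑ i ∈ s, ∑ j ∈ t, ∫ p in Q i ×ˢ Q j, f p := by
  have hcells : (⋃ i ∈ s, Q i) ×ˢ (⋃ j ∈ t, Q j) = ⋃ c ∈ s ×ˢ t, Q c.1 ×ˢ Q c.2 := by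
    ext ⟨x, y⟩; simp; tauto
  rw [hcells, integral_biUnion_finset _ (fun c _ => (hQ.1 c.1).prod (hQ.1 c.2))
    (hQ.pairwise_disjoint_prod.set_pairwise _) fun c _ => hf.integrableOn, sum_product]

theorem cellAvg_mem_Icc (hQ : IsPartition Q) (hW : Integrable fun p : I × I => W p.1 p.2)
    (hW01 : ∀ x y, W x y ∈ Set.Icc (0 : ℝ) 1) (i j : ι) :
    cellAvg W Q i j ∈ Set.Icc (0 : ℝ) 1 := by
  unfold cellAvg
  split_ifs with h0
  · simp
  have hcell : MeasurableSet (Q i ×ˢ Q j) := (hQ.1 i).prod (hQ.1 j)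
  have hvol : 0 < (volume (Q i ×ˢ Q j)).toReal := ENNReal.toReal_pos h0 (by simp)
  have hle : ∫ p in Q i ×ˢ Q j, W p.1 p.2 ≤ (volume (Q i ×ˢ Q j)).toReal := by
    simpa [measureReal_def] using setIntegral_mono_on hW.integrableOn
      (integrable_const (1 : ℝ)).integrableOn hcell fun p _ => (hW01 p.1 p.2).2
  exact ⟨div_nonneg (setIntegral_nonneg hcell fun p _ => (hW01 p.1 p.2).1) hvol.le,
    (div_le_one hvol).2 hle⟩

variable [Fintype ι] [Fintype κ]

theorem integral_eq_sum_setIntegral_cells (hQ : IsPartition Q) {f : I × I → ℝ}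
    (hf : Integrable f) :
    ∫ p, f p = ∑ i, ∑ j, ∫ p in Q i ×ˢ Q j, f p := by
  have huniv : (⋃ i ∈ (univ : Finset ι), Q i) = Set.univ := by simpa using hQ.2.2
  rw [← setIntegral_biUnion_prod_biUnion hQ hf, huniv, Set.univ_prod_univ, setIntegral_univ]

theorem stepFn_eq_cellAvg (hQ : IsPartition Q) {i j : ι} {x y : I} (hx : x ∈ Q i)
    (hy : y ∈ Q j) : stepFn W Q x y = cellAvg W Q i j := by
  rw [stepFn, sum_eq_single i, sum_eq_single j, Set.indicator_of_mem (Set.mk_mem_prod hx hy)]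
  · exact fun j' _ hj' => Set.indicator_of_notMem
      (fun h => Set.disjoint_left.1 (hQ.2.1 hj') h.2 hy) _
  · simp
  · exact fun i' _ hi' => sum_eq_zero fun j' _ => Set.indicator_of_notMem
      (fun h => Set.disjoint_left.1 (hQ.2.1 hi') h.1 hx) _
  · simp

theorem stepFn_comp_equiv (e : κ ≃ ι) : stepFn W (Q ∘ e) = stepFn W Q := by
  ext x y
  simp only [stepFn]
  rw [← e.sum_comp]
  exact sum_congr rfl fun i _ => e.sum_comp
    fun j => Set.indicator (Q (e i) ×ˢ Q j) (fun _ => cellAvg W Q (e i) j) (x, y)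

theorem memLp_stepFn (hQ : IsPartition Q) (p : ENNReal) :
    MemLp (fun q : I × I => stepFn W Q q.1 q.2) p := by
  have hsum : (fun q : I × I => stepFn W Q q.1 q.2)
      = ∑ i, ∑ j, (Q i ×ˢ Q j).indicator fun _ => cellAvg W Q i j := by
    ext q; simp [stepFn, Finset.sum_apply]
  rw [hsum]
  exact memLp_finsetSum' _ fun i _ => memLp_finsetSum' _ fun j _ =>
    (memLp_const _).indicator ((hQ.1 i).prod (hQ.1 j))

theorem integrable_stepFn (hQ : IsPartition Q) :
    Integrable (fun q : I × I => stepFn W Q q.1 q.2) :=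
  memLp_one_iff_integrable.1 (memLp_stepFn hQ 1)

theorem setIntegral_stepFn_cell (hQ : IsPartition Q) (i j : ι) :
    ∫ p in Q i ×ˢ Q j, stepFn W Q p.1 p.2 = ∫ p in Q i ×ˢ Q j, W p.1 p.2 := by
  by_cases h0 : volume (Q i ×ˢ Q j) = 0
  · rw [setIntegral_measure_zero _ h0, setIntegral_measure_zero _ h0]
  rw [setIntegral_congr_fun ((hQ.1 i).prod (hQ.1 j))
      fun p hp => stepFn_eq_cellAvg hQ hp.1 hp.2, setIntegral_const, cellAvg, if_neg h0,
    smul_eq_mul, measureReal_def, mul_div_cancel₀ _ (ENNReal.toReal_ne_zero.2 ⟨h0, by simp⟩)]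

theorem stepFn_mem_Icc (hQ : IsPartition Q) (hW : Integrable fun p : I × I => W p.1 p.2)
    (hW01 : ∀ x y, W x y ∈ Set.Icc (0 : ℝ) 1) (x y : I) :
    stepFn W Q x y ∈ Set.Icc (0 : ℝ) 1 := by
  obtain ⟨i, hi⟩ := hQ.exists_mem x
  obtain ⟨j, hj⟩ := hQ.exists_mem y
  rw [stepFn_eq_cellAvg hQ hi hj]
  exact cellAvg_mem_Icc hQ hW hW01 i j

end Integral

section Energy

variable {ι κ : Type*} [Fintype ι] [Fintype κ] {Q : ι → Set I} {Q' : κ → Set I}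
  {W : I → I → ℝ}

theorem setIntegral_stepFn_of_isUnionOfCells (hQ : IsPartition Q)
    (hW : Integrable fun p : I × I => W p.1 p.2) {A B : Set I} (hA : IsUnionOfCells Q A)
    (hB : IsUnionOfCells Q B) :
    ∫ p in A ×ˢ B, stepFn W Q p.1 p.2 = ∫ p in A ×ˢ B, W p.1 p.2 := by
  obtain ⟨s, rfl⟩ := hA
  obtain ⟨t, rfl⟩ := hB
  rw [setIntegral_biUnion_prod_biUnion hQ (integrable_stepFn hQ),
    setIntegral_biUnion_prod_biUnion hQ hW]
  exact sum_congr rfl fun i _ => sum_congr rfl fun j _ => setIntegral_stepFn_cell hQ i j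

theorem integral_stepFn_mul (hQ : IsPartition Q) {g : I × I → ℝ} (hg : Integrable g) :
    ∫ p : I × I, stepFn W Q p.1 p.2 * g p = ∑ i, ∑ j, cellAvg W Q i j * ∫ p in Q i ×ˢ Q j, g p := by
  have hint : Integrable fun p : I × I => stepFn W Q p.1 p.2 * g p :=
    (memLp_stepFn hQ ⊤).integrable_mul (memLp_one_iff_integrable.2 hg)
  rw [integral_eq_sum_setIntegral_cells hQ hint]
  refine sum_congr rfl fun i _ => sum_congr rfl fun j _ => ?_
  rw [← integral_const_mul]
  exact setIntegral_congr_fun ((hQ.1 i).prod (hQ.1 j))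
    fun p hp => by rw [stepFn_eq_cellAvg hQ hp.1 hp.2]

theorem integral_stepFn_mul_stepFn_of_refines (hQ : IsPartition Q) (hQ' : IsPartition Q')
    (hW : Integrable fun p : I × I => W p.1 p.2) (h : Refines Q' Q) :
    ∫ p : I × I, stepFn W Q p.1 p.2 * stepFn W Q' p.1 p.2
      = ∫ p : I × I, stepFn W Q p.1 p.2 ^ 2 := by
  simp_rw [sq]
  rw [integral_stepFn_mul hQ (integrable_stepFn hQ'), integral_stepFn_mul hQ (integrable_stepFn hQ)]
  refine sum_congr rfl fun i _ => sum_congr rfl fun j _ => ?_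
  rw [setIntegral_stepFn_of_isUnionOfCells hQ' hW (h i) (h j), setIntegral_stepFn_cell hQ]

variable (W) in
def energy (Q : ι → Set I) : ℝ :=
  ∫ p : I × I, stepFn W Q p.1 p.2 ^ 2

theorem energy_nonneg : 0 ≤ energy W Q := by
  rw [energy]
  exact integral_nonneg fun _ => sq_nonneg _

theorem energy_le_one (hQ : IsPartition Q) (hW : Integrable fun p : I × I => W p.1 p.2)
    (hW01 : ∀ x y, W x y ∈ Set.Icc (0 : ℝ) 1) : energy W Q ≤ 1 := by
  have hle : ∀ p : I × I, stepFn W Q p.1 p.2 ^ 2 ≤ 1 := fun p => by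
    obtain ⟨h0, h1⟩ := stepFn_mem_Icc hQ hW hW01 p.1 p.2
    exact pow_le_one₀ h0 h1
  rw [energy]
  simpa using integral_mono (memLp_stepFn hQ 2).integrable_sq (integrable_const 1) hle

theorem energy_comp_equiv (e : κ ≃ ι) : energy W (Q ∘ e) = energy W Q := by
  rw [energy, energy, stepFn_comp_equiv]

theorem energy_eq_add_integral_sq_sub (hQ : IsPartition Q) (hQ' : IsPartition Q')
    (hW : Integrable fun p : I × I => W p.1 p.2) (h : Refines Q' Q) :
    energy W Q' = energy W Q + ∫ p : I × I, (stepFn W Q' p.1 p.2 - stepFn W Q p.1 p.2) ^ 2 := by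
  have hf := memLp_stepFn (W := W) hQ 2
  have hg := memLp_stepFn (W := W) hQ' 2
  have hf2 : Integrable fun p : I × I => stepFn W Q p.1 p.2 ^ 2 := hf.integrable_sq
  have hg2 : Integrable fun p : I × I => stepFn W Q' p.1 p.2 ^ 2 := hg.integrable_sq
  have hfg : Integrable fun p : I × I => stepFn W Q p.1 p.2 * stepFn W Q' p.1 p.2 :=
    hf.integrable_mul hg
  have hexpand : ∫ p : I × I, (stepFn W Q' p.1 p.2 - stepFn W Q p.1 p.2) ^ 2
      = (∫ p : I × I, stepFn W Q' p.1 p.2 ^ 2) + (∫ p : I × I, stepFn W Q p.1 p.2 ^ 2)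
        - 2 * ∫ p : I × I, stepFn W Q p.1 p.2 * stepFn W Q' p.1 p.2 := by
    rw [← integral_add hg2 hf2, ← integral_const_mul]
    refine Eq.trans ?_ (integral_sub (hg2.add hf2) (hfg.const_mul 2))
    congr 1 with p
    ring
  rw [hexpand, integral_stepFn_mul_stepFn_of_refines hQ hQ' hW h, energy, energy]
  ring

end Energy

theorem sq_setIntegral_le_integral_sq {α : Type*} [MeasurableSpace α] {μ : Measure α}
    [IsProbabilityMeasure μ] {f : α → ℝ} (hf : MemLp f 2 μ) {s : Set α} (hs : MeasurableSet s) :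
    (∫ x in s, f x ∂μ) ^ 2 ≤ ∫ x, f x ^ 2 ∂μ := by
  have hfs : MemLp (s.indicator f) 2 μ := hf.indicator hs
  have hvar := ProbabilityTheory.variance_nonneg (s.indicator f) μ
  rw [ProbabilityTheory.variance_eq_sub hfs, sub_nonneg] at hvar
  calc (∫ x in s, f x ∂μ) ^ 2 = (∫ x, s.indicator f x ∂μ) ^ 2 := by rw [integral_indicator hs]
    _ ≤ ∫ x, s.indicator f x ^ 2 ∂μ := hvar
    _ ≤ ∫ x, f x ^ 2 ∂μ := integral_mono hfs.integrable_sq hf.integrable_sq fun x => by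
        by_cases hx : x ∈ s <;> simp [hx, sq_nonneg]

section Increment

variable {ι : Type*} [Fintype ι] {Q : ι → Set I} {W : I → I → ℝ} {ε : ℝ}

theorem add_sq_lt_energy_refineBy (hQ : IsPartition Q)
    (hW : Integrable fun p : I × I => W p.1 p.2) {S T : Set I} (hS : MeasurableSet S)
    (hT : MeasurableSet T) (hε : 0 ≤ ε)
    (h : ε < |∫ p in S ×ˢ T, (W p.1 p.2 - stepFn W Q p.1 p.2)|) :
    energy W Q + ε ^ 2 < energy W (refineBy (refineBy Q S) T) := by
  set R := refineBy (refineBy Q S) T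
  have hR : IsPartition R := (hQ.refineBy hS).refineBy hT
  have hRQ : Refines R Q := (refines_refineBy Q S).trans (refines_refineBy _ T)
  have hSR : IsUnionOfCells R S :=
    (isUnionOfCells_refineBy hQ S).of_refines (refines_refineBy _ T)
  have hTR : IsUnionOfCells R T := isUnionOfCells_refineBy (hQ.refineBy hS) T
  have hD : MemLp (fun p : I × I => stepFn W R p.1 p.2 - stepFn W Q p.1 p.2) 2 :=
    (memLp_stepFn hR 2).sub (memLp_stepFn hQ 2)
  have hgain : ∫ p in S ×ˢ T, (stepFn W R p.1 p.2 - stepFn W Q p.1 p.2)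
      = ∫ p in S ×ˢ T, (W p.1 p.2 - stepFn W Q p.1 p.2) := by
    rw [integral_sub (integrable_stepFn hR).integrableOn (integrable_stepFn hQ).integrableOn,
      integral_sub hW.integrableOn (integrable_stepFn hQ).integrableOn,
      setIntegral_stepFn_of_isUnionOfCells hR hW hSR hTR]
  rw [energy_eq_add_integral_sq_sub hQ hR hW hRQ]
  calc energy W Q + ε ^ 2
      < energy W Q + |∫ p in S ×ˢ T, (W p.1 p.2 - stepFn W Q p.1 p.2)| ^ 2 := by gcongr
    _ = energy W Q + (∫ p in S ×ˢ T, (stepFn W R p.1 p.2 - stepFn W Q p.1 p.2)) ^ 2 := by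
      rw [sq_abs, hgain]
    _ ≤ _ := by grw [sq_setIntegral_le_integral_sq hD (hS.prod hT)]

theorem exists_lt_abs_setIntegral_of_lt_cutNormSets {U : I → I → ℝ} (h : ε < cutNormSets U) :
    ∃ S T : Set I, MeasurableSet S ∧ MeasurableSet T ∧ ε < |∫ p in S ×ˢ T, U p.1 p.2| := by
  obtain ⟨r, ⟨S, T, hS, hT, rfl⟩, hr⟩ :=
    exists_lt_of_lt_csSup (by exact ⟨0, ∅, ∅, .empty, .empty, by simp⟩) h
  exact ⟨S, T, hS, hT, hr⟩

theorem exists_isPartition_add_sq_le_energy (hQ : IsPartition Q)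
    (hW : Integrable fun p : I × I => W p.1 p.2) (hε : 0 ≤ ε)
    (hcut : ε < cutNormSets fun x y => W x y - stepFn W Q x y) :
    ∃ Q' : Fin (4 * Fintype.card ι) → Set I, IsPartition Q' ∧ energy W Q + ε ^ 2 ≤ energy W Q' := by
  obtain ⟨S, T, hS, hT, hST⟩ := exists_lt_abs_setIntegral_of_lt_cutNormSets hcut
  have e : (ι × Bool) × Bool ≃ Fin (4 * Fintype.card ι) :=
    Fintype.equivFinOfCardEq (by simp only [Fintype.card_prod, Fintype.card_bool]; ring)
  refine ⟨refineBy (refineBy Q S) T ∘ e.symm, ((hQ.refineBy hS).refineBy hT).comp_equiv _, ?_⟩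
  rw [energy_comp_equiv]
  exact (add_sq_lt_energy_refineBy hQ hW hS hT hε hST).le

end Increment

theorem exists_of_energy_increment {α : Type*} {P : α → Prop} (size : α → ℕ)
    (energy : α → ℝ) {m : ℕ} (hm : 1 ≤ m) {δ : ℝ} (hδ : 0 < δ) (hle : ∀ x, energy x ≤ 1)
    (x₀ : α) (hx₀ : size x₀ ≤ 1) (he₀ : 0 ≤ energy x₀)
    (hstep : ∀ x, ¬ P x → ∃ y, size y ≤ m * size x ∧ energy x + δ ≤ energy y) :
    ∃ x, P x ∧ size x ≤ m ^ ⌊δ⁻¹⌋₊ := by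
  have key : ∀ k : ℕ, ∃ x, size x ≤ m ^ k ∧ (P x ∨ k * δ ≤ energy x) := by
    intro k
    induction k with
    | zero => exact ⟨x₀, by simpa using hx₀, Or.inr (by simpa using he₀)⟩
    | succ k ih =>
      obtain ⟨x, hx, hPx⟩ := ih
      by_cases hP : P x
      · exact ⟨x, hx.trans (Nat.pow_le_pow_right hm k.le_succ), Or.inl hP⟩
      obtain ⟨y, hy, hey⟩ := hstep x hP
      refine ⟨y, hy.trans ?_, Or.inr ?_⟩
      · rw [pow_succ']
        exact Nat.mul_le_mul_left m hx
      · push_cast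
        linarith [hPx.resolve_left hP]
  obtain ⟨x, hx, hPx⟩ := key ⌊δ⁻¹⌋₊
  refine ⟨x, by_contra fun hP => ?_, hx⟩
  obtain ⟨y, -, hey⟩ := hstep x hP
  have hfloor : 1 < (⌊δ⁻¹⌋₊ + 1) * δ :=
    (inv_lt_iff_one_lt_mul₀ hδ).1 (Nat.lt_floor_add_one δ⁻¹)
  linarith [hPx.resolve_left hP, hle y]

theorem four_pow_floor_le_two_rpow {x : ℝ} (hx : 0 ≤ x) : (4 : ℝ) ^ ⌊x⌋₊ ≤ 2 ^ (2 * x) := by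
  calc (4 : ℝ) ^ ⌊x⌋₊ = 2 ^ (2 * (⌊x⌋₊ : ℝ)) := by
        rw [Real.rpow_mul zero_le_two, Real.rpow_natCast]; norm_num
    _ ≤ 2 ^ (2 * x) := by gcongr; exacts [one_le_two, Nat.floor_le hx]

end WeakRegularity

open WeakRegularity in
theorem weak_regularity_lemma_general
    (ε : ℝ) (hε : 0 < ε)
    (W : I → I → ℝ) (hWmeas : Measurable fun p : I × I => W p.1 p.2)
    (hWrange : ∀ x y, W x y ∈ Set.Icc (0:ℝ) 1) :
    ∃ (q : ℕ) (Q : Fin q → Set I), (q : ℝ) ≤ 2 ^ (2 / ε ^ 2 : ℝ) ∧ IsPartition Q ∧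
      cutNormSets (fun x y => W x y - stepFn W Q x y) ≤ ε := by
  have hW : Integrable fun p : I × I => W p.1 p.2 :=
    .of_bound hWmeas.aestronglyMeasurable 1 (ae_of_all _ fun p =>
      abs_le.2 ⟨by linarith [(hWrange p.1 p.2).1], (hWrange p.1 p.2).2⟩)
  have hstep : ∀ x : Σ q, {Q : Fin q → Set I // IsPartition Q},
      ¬ cutNormSets (fun a b => W a b - stepFn W x.2.1 a b) ≤ ε →
        ∃ y : Σ q, {Q : Fin q → Set I // IsPartition Q},
          y.1 ≤ 4 * x.1 ∧ energy W x.2.1 + ε ^ 2 ≤ energy W y.2.1 := by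
    rintro ⟨q, Q, hQ⟩ hcut
    obtain ⟨Q', hQ', hE⟩ := exists_isPartition_add_sq_le_energy hQ hW hε.le (not_le.1 hcut)
    exact ⟨⟨_, Q', hQ'⟩, by simp, hE⟩
  obtain ⟨⟨q, Q, hQ⟩, hcut, hq⟩ := exists_of_energy_increment
    (fun x : Σ q, {Q : Fin q → Set I // IsPartition Q} => x.1) (fun x => energy W x.2.1)
    (m := 4) (by norm_num) (pow_pos hε 2) (fun x => energy_le_one x.2.2 hW hWrange)
    ⟨1, _, isPartition_const_univ (Fin 1)⟩ le_rfl energy_nonneg hstep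
  refine ⟨q, Q, ?_, hQ, hcut⟩
  calc (q : ℝ) ≤ (4 : ℝ) ^ ⌊(ε ^ 2)⁻¹⌋₊ := by exact_mod_cast hq
    _ ≤ 2 ^ (2 * (ε ^ 2)⁻¹) := four_pow_floor_le_two_rpow (by positivity)
    _ = 2 ^ (2 / ε ^ 2 : ℝ) := by rw [div_eq_mul_inv]

/-- Weak regularity lemma, Frieze–Kannan: for every `ε > 0` and every
symmetric measurable `W : [0,1]² → [0,1]` there is a measurable partition `Q` of `[0,1]`
into at most `2^(2/ε²)` parts with `‖W − W_Q‖_□ ≤ ε`. -/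
theorem weak_regularity_lemma
    (ε : ℝ) (hε : 0 < ε)
    (W : I → I → ℝ) (hWmeas : Measurable fun p : I × I => W p.1 p.2)
    (hWsymm : ∀ x y, W x y = W y x) (hWrange : ∀ x y, W x y ∈ Set.Icc (0:ℝ) 1) :
    ∃ (q : ℕ) (Q : Fin q → Set I), (q : ℝ) ≤ 2 ^ (2 / ε ^ 2 : ℝ) ∧ IsPartition Q ∧
      cutNormSets (fun x y => W x y - stepFn W Q x y) ≤ ε :=
  weak_regularity_lemma_general ε hε W hWmeas hWrange

end
end

section
/- Weak regularity lemma for tuples of hypergraphons: Let k ≥ 2, ε > 0, W₁,…,W_m be k-uniform hypergraphons, and Q a symmetric measurable partition of [0,1]^{r[k−1]}. Then there exists a symmetric partition Q' refining Q, with every part of Q refined into at most ⌈2^{km/ε²}⌉ parts, such that ‖W_i − (W_i)_{Q'}‖_{□^{k−1}} ≤ ε for each i = 1,…,m. -/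
open MeasureTheory Finset
open scoped unitInterval

noncomputable section

/-- `r_<[k]`: the nonempty proper subsets of `[k] = {1,…,k}`. -/
def PSub (k : ℕ) : Type := {A : Finset (Fin k) // A.Nonempty ∧ A ≠ Finset.univ}

instance (k : ℕ) : Fintype (PSub k) := by unfold PSub; infer_instance

/-- `r[j]`: the nonempty subsets of `[j]`. -/
def NSub (j : ℕ) : Type := {A : Finset (Fin j) // A.Nonempty}

instance (j : ℕ) : Fintype (NSub j) := by unfold NSub; infer_instance

/-- `r(V,m)` for `V = [n]`: nonempty subsets of `V` of size at most `m`. -/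
def RSubV (n m : ℕ) : Type := {A : Finset (Fin n) // A.Nonempty ∧ A.card ≤ m}

instance (n m : ℕ) : Fintype (RSubV n m) := by unfold RSubV; infer_instance

/-- The action of a permutation of `[k]` on `r_<[k]`. -/
def permPSub {k : ℕ} (τ : Equiv.Perm (Fin k)) (A : PSub k) : PSub k :=
  ⟨A.1.image τ, A.2.1.image τ, fun h => A.2.2 (Finset.eq_univ_of_card _ (by
    have hc := congrArg Finset.card h
    rwa [Finset.card_image_of_injective _ τ.injective, Finset.card_univ] at hc))⟩

/-- A `k`-uniform hypergraphon kernel is symmetric if it is invariant under the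
coordinate permutations induced by permutations of `[k]`. -/
def IsSymmetricK {k : ℕ} (W : (PSub k → I) → ℝ) : Prop :=
  ∀ (τ : Equiv.Perm (Fin k)) (x : PSub k → I), W (fun A => x (permPSub τ A)) = W x

/-- A `k`-uniform hypergraphon: a symmetric measurable function `[0,1]^{r_<[k]} → [0,1]`. -/
def IsHypergraphon {k : ℕ} (W : (PSub k → I) → ℝ) : Prop :=
  Measurable W ∧ IsSymmetricK W ∧ ∀ x, W x ∈ Set.Icc (0:ℝ) 1

/-- Given an edge `e` of size `k` in `[n]`, transport an index `A ∈ r_<[k]` to the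
corresponding subset of `e` (via the order isomorphism `[k] ≃ e`), viewed in `r([n],k-1)`. -/
def edgeVar {n k : ℕ} (e : Finset (Fin n)) (he : e.card = k) (A : PSub k) :
    RSubV n (k - 1) :=
  ⟨A.1.image (fun j => ((e.orderIsoOfFin he) j : Fin n)),
    A.2.1.image _, by
      rw [Finset.card_image_of_injective _
        (fun a b hab => (e.orderIsoOfFin he).injective (Subtype.ext hab))]
      refine Nat.le_pred_of_lt (lt_of_le_of_ne (by simpa using A.1.card_le_univ) ?_)
      exact fun hc => A.2.2 (Finset.eq_univ_of_card _ (by simpa using hc))⟩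

/-- `t_α(F, W)`: homomorphism density of the `k`-uniform hypergraph with edge set `E`
on `[n]` in the tuple `W = (W_1,…,W_m)` of hypergraphon kernels, with edge `e`
landing in `W_{α(e)}`. -/
def homDensityVec {n k m : ℕ} (E : Finset (Finset (Fin n))) (hE : ∀ e ∈ E, e.card = k)
    (W : Fin m → ((PSub k → I) → ℝ)) (α : Finset (Fin n) → Fin m) : ℝ :=
  ∫ x : RSubV n (k - 1) → I,
    ∏ e ∈ E.attach, W (α e.1) (fun A => x (edgeVar e.1 (hE e.1 e.2) A))

/-- `t(F, W)`: homomorphism density of a single hypergraphon kernel. -/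
def homDensityK {n k : ℕ} (E : Finset (Finset (Fin n))) (hE : ∀ e ∈ E, e.card = k)
    (W : (PSub k → I) → ℝ) : ℝ :=
  ∫ x : RSubV n (k - 1) → I,
    ∏ e ∈ E.attach, W (fun A => x (edgeVar e.1 (hE e.1 e.2) A))

/-- The order embedding `[k-1] → [k]` missing the element `i`. -/
def embMiss {k : ℕ} (hk : 1 ≤ k) (i : Fin k) (j : Fin (k - 1)) : Fin k :=
  Fin.cast (Nat.succ_pred_eq_of_pos hk)
    ((Fin.cast (Nat.succ_pred_eq_of_pos hk).symm i).succAbove j)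

lemma embMiss_ne {k : ℕ} (hk : 1 ≤ k) (i : Fin k) (j : Fin (k - 1)) :
    embMiss hk i j ≠ i := by
  intro h
  apply Fin.succAbove_ne (Fin.cast (Nat.succ_pred_eq_of_pos hk).symm i) j
  apply Fin.ext
  have := congrArg Fin.val h
  simpa [embMiss] using this

/-- Restriction `x ↦ x_{r([k]∖{i})}`, identified with a point of `[0,1]^{r[k-1]}`
via the order isomorphism `[k-1] ≃ [k]∖{i}`. -/
def projMiss {k : ℕ} (hk : 1 ≤ k) (i : Fin k) (x : PSub k → I) (A : NSub (k - 1)) : I :=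
  x ⟨A.1.image (embMiss hk i), A.2.image _, fun hu => by
    have hi : i ∈ A.1.image (embMiss hk i) := hu ▸ Finset.mem_univ i
    obtain ⟨j, _, hj⟩ := Finset.mem_image.mp hi
    exact embMiss_ne hk i j hj⟩

/-- The action of a permutation of `[j]` on `r[j]`. -/
def permNSub {j : ℕ} (τ : Equiv.Perm (Fin j)) (A : NSub j) : NSub j :=
  ⟨A.1.image τ, A.2.image τ⟩

/-- Symmetry for functions on `[0,1]^{r[j]}`. -/
def IsSymmetricFn {j : ℕ} (u : (NSub j → I) → ℝ) : Prop :=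
  ∀ (τ : Equiv.Perm (Fin j)) (x : NSub j → I), u (fun A => x (permNSub τ A)) = u x

/-- The `(k-1)`-cut norm `‖W‖_{□^{k-1}}`: the supremum over symmetric measurable
`u_1,…,u_k : [0,1]^{r[k-1]} → [0,1]` of `|∫ W(x) ∏ᵢ uᵢ(x_{r([k]∖{i})}) dx|`. -/
def cutNormK {k : ℕ} (hk : 1 ≤ k) (W : (PSub k → I) → ℝ) : ℝ :=
  sSup {r : ℝ | ∃ u : Fin k → ((NSub (k - 1) → I) → ℝ),
    (∀ i, Measurable (u i)) ∧ (∀ i, IsSymmetricFn (u i)) ∧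
    (∀ i x, u i x ∈ Set.Icc (0:ℝ) 1) ∧
    r = |∫ x : PSub k → I, W x * ∏ i : Fin k, u i (projMiss hk i x)|}

/-- A subset of `[0,1]^{r[j]}` is symmetric if it is invariant under the coordinate
permutations induced by permutations of `[j]`. -/
def IsSymmSet {j : ℕ} (S : Set (NSub j → I)) : Prop :=
  ∀ (τ : Equiv.Perm (Fin j)) (x : NSub j → I), x ∈ S → (fun A => x (permNSub τ A)) ∈ S

/-- A finite measurable partition of `[0,1]^{r[j]}`. -/
def IsMPartition {j : ℕ} {ι : Type*} (Q : ι → Set (NSub j → I)) : Prop :=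
  (∀ i, MeasurableSet (Q i)) ∧ Pairwise (Function.onFun Disjoint Q) ∧
    (⋃ i, Q i) = Set.univ

/-- A symmetric finite measurable partition of `[0,1]^{r[j]}`. -/
def IsSymmPartition {j : ℕ} {ι : Type*} (Q : ι → Set (NSub j → I)) : Prop :=
  IsMPartition Q ∧ ∀ i, IsSymmSet (Q i)

/-- The cell of `[0,1]^{r_<[k]}` indexed by `f ∈ [q]^k`, cut out by the `k` embedded
copies of the partition `Q` of `[0,1]^{r[k-1]}`. -/
def cellK {k : ℕ} (hk : 1 ≤ k) {ι : Type*} (Q : ι → Set (NSub (k - 1) → I))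
    (f : Fin k → ι) : Set (PSub k → I) :=
  {x | ∀ i : Fin k, projMiss hk i x ∈ Q (f i)}

/-- The volume of the cell indexed by `f`. -/
def cellVol {k : ℕ} (hk : 1 ≤ k) {ι : Type*} (Q : ι → Set (NSub (k - 1) → I))
    (f : Fin k → ι) : ℝ :=
  (volume (cellK hk Q f)).toReal

/-- The average of `W` over the cell indexed by `f` (zero for null cells). -/
def cellAvgK {k : ℕ} (hk : 1 ≤ k) {ι : Type*} (W : (PSub k → I) → ℝ)
    (Q : ι → Set (NSub (k - 1) → I)) (f : Fin k → ι) : ℝ :=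
  if volume (cellK hk Q f) = 0 then 0
  else (∫ x in cellK hk Q f, W x) / (volume (cellK hk Q f)).toReal

/-- The stepping operator `W_Q`: replace `W` on each cell of the partition of
`[0,1]^{r_<[k]}` induced by `Q` by its average over that cell. -/
def stepK {k : ℕ} (hk : 1 ≤ k) {ι : Type*} [Fintype ι] [DecidableEq ι]
    (W : (PSub k → I) → ℝ) (Q : ι → Set (NSub (k - 1) → I)) (x : PSub k → I) : ℝ :=
  ∑ f : Fin k → ι, Set.indicator (cellK hk Q f) (fun _ => cellAvgK hk W Q f) x

/-!
Energy increment. The energy of `W` with respect to `P` is `∫ W_P²`. For a refinement `P'` of `P`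
the difference `W_{P'} - W_P` is orthogonal to `W_P`, so the energy grows by `∫ (W_{P'} - W_P)²`.
If `‖W - W_P‖_{□^{k-1}} > ε`, a layer-cake argument produces symmetric sets `S₁, …, S_k` whose
indicators already witness this, and after refining every part of `P` by them the correlation
`ε < |∫ (W - W_P) ∏ 1_{S_j}| = |∫ (W_{P'} - W_P) ∏ 1_{S_j}|` forces an energy gain above `ε²`.
The total energy of `W₁, …, W_m` never exceeds `m`, so after at most `m / ε²` steps, each splitting
every part into at most `2^k` pieces, all the cut norms are at most `ε`.
-/

theorem sq_integral_le_integral_sq {α : Type*} [MeasurableSpace α] {μ : Measure α}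
    [IsProbabilityMeasure μ] {f : α → ℝ} (hf : Integrable f μ)
    (hf2 : Integrable (fun x => f x ^ 2) μ) : (∫ x, f x ∂μ) ^ 2 ≤ ∫ x, f x ^ 2 ∂μ :=
  (Even.convexOn_pow even_two).map_integral_le (continuous_pow 2).continuousOn isClosed_univ
    (Filter.Eventually.of_forall fun _ => Set.mem_univ _) hf hf2

theorem abs_le_one_of_mem_Icc {x : ℝ} (hx : x ∈ Set.Icc (0 : ℝ) 1) : |x| ≤ 1 :=
  abs_le.mpr ⟨(neg_nonpos.mpr zero_le_one).trans hx.1, hx.2⟩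

theorem integrable_of_abs_le {α : Type*} [MeasurableSpace α] {μ : Measure α}
    [IsFiniteMeasure μ] {f : α → ℝ} (hf : Measurable f) {C : ℝ} (hC : ∀ x, |f x| ≤ C) :
    Integrable f μ :=
  Integrable.of_bound hf.aestronglyMeasurable C (Filter.Eventually.of_forall hC)

theorem sq_integral_mul_le_integral_sq {α : Type*} [MeasurableSpace α] {μ : Measure α}
    [IsProbabilityMeasure μ] {f g : α → ℝ} (hf : Integrable f μ)
    (hf2 : Integrable (fun x => f x ^ 2) μ) (hg : AEStronglyMeasurable g μ)
    (hg1 : ∀ x, |g x| ≤ 1) : (∫ x, f x * g x ∂μ) ^ 2 ≤ ∫ x, f x ^ 2 ∂μ := by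
  have hg2 : ∀ x, g x ^ 2 ≤ 1 := fun x => by simpa using sq_le_one_iff_abs_le_one _ |>.mpr (hg1 x)
  have hfg2 : Integrable (fun x => (f x * g x) ^ 2) μ := by
    simp_rw [mul_pow]
    exact hf2.mul_bdd (c := 1) (hg.pow 2) (Filter.Eventually.of_forall fun x => by
      simpa [abs_of_nonneg (sq_nonneg (g x))] using hg2 x)
  refine (sq_integral_le_integral_sq (hf.mul_bdd hg (Filter.Eventually.of_forall hg1)) hfg2).trans
    (integral_mono_of_nonneg (Filter.Eventually.of_forall fun x => sq_nonneg _) hf2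
      (Filter.Eventually.of_forall fun x => ?_))
  simp only [mul_pow]
  exact mul_le_of_le_one_right (sq_nonneg _) (hg2 x)

section Partition

variable {j : ℕ} {ι ι' κ : Type*}

theorem IsMPartition.existsUnique {Q : ι → Set (NSub j → I)} (hQ : IsMPartition Q)
    (y : NSub j → I) : ∃! a, y ∈ Q a := by
  obtain ⟨a, ha⟩ := Set.mem_iUnion.mp (hQ.2.2 ▸ Set.mem_univ y)
  exact ⟨a, ha, fun b hb => by_contra fun hne => Set.disjoint_left.mp (hQ.2.1 hne) hb ha⟩

theorem IsMPartition.comp_equiv {Q : ι → Set (NSub j → I)} (hQ : IsMPartition Q)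
    (e : ι' ≃ ι) : IsMPartition (Q ∘ e) :=
  ⟨fun a => hQ.1 (e a), fun _ _ hab => hQ.2.1 (e.injective.ne hab),
    (e.surjective.iUnion_comp Q).trans hQ.2.2⟩

theorem IsSymmPartition.comp_equiv {Q : ι → Set (NSub j → I)} (hQ : IsSymmPartition Q)
    (e : ι' ≃ ι) : IsSymmPartition (Q ∘ e) :=
  ⟨hQ.1.comp_equiv e, fun a => hQ.2 (e a)⟩

theorem permNSub_mul (τ₁ τ₂ : Equiv.Perm (Fin j)) (A : NSub j) :
    permNSub (τ₁ * τ₂) A = permNSub τ₁ (permNSub τ₂ A) :=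
  Subtype.ext (by simp [permNSub, Finset.image_image, Function.comp_def])

theorem permNSub_one (A : NSub j) : permNSub 1 A = A :=
  Subtype.ext (by simp [permNSub])

theorem IsSymmSet.compl {S : Set (NSub j → I)} (hS : IsSymmSet S) : IsSymmSet Sᶜ := by
  intro τ x hx hτx
  apply hx
  simpa only [← permNSub_mul, mul_inv_cancel, permNSub_one] using hS τ⁻¹ _ hτx

theorem IsSymmSet.iInter {S : κ → Set (NSub j → I)} (hS : ∀ a, IsSymmSet (S a)) :
    IsSymmSet (⋂ a, S a) :=
  fun τ x hx => Set.mem_iInter.mpr fun a => hS a τ x (Set.mem_iInter.mp hx a)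

def refineBySets (Q : ι → Set (NSub j → I)) (S : κ → Set (NSub j → I)) :
    ι × (κ → Bool) → Set (NSub j → I) :=
  fun p => Q p.1 ∩ ⋂ a, if p.2 a then S a else (S a)ᶜ

theorem refineBySets_subset (Q : ι → Set (NSub j → I)) (S : κ → Set (NSub j → I))
    (p : ι × (κ → Bool)) : refineBySets Q S p ⊆ Q p.1 :=
  Set.inter_subset_left

theorem indicator_one_eq_of_mem_refineBySets {Q : ι → Set (NSub j → I)}
    {S : κ → Set (NSub j → I)} {p : ι × (κ → Bool)} {y : NSub j → I}
    (hy : y ∈ refineBySets Q S p) (a : κ) :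
    (S a).indicator (fun _ => (1 : ℝ)) y = if p.2 a then 1 else 0 := by
  have h := Set.mem_iInter.mp hy.2 a
  split_ifs at h ⊢
  exacts [Set.indicator_of_mem h _, Set.indicator_of_notMem h _]

theorem IsMPartition.refineBySets [Finite κ] {Q : ι → Set (NSub j → I)} (hQ : IsMPartition Q)
    {S : κ → Set (NSub j → I)} (hS : ∀ a, MeasurableSet (S a)) :
    IsMPartition (refineBySets Q S) := by
  classical
  refine ⟨fun p => (hQ.1 p.1).inter (.iInter fun a => ?_), ?_, ?_⟩
  · split_ifs
    exacts [hS a, (hS a).compl]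
  · rintro ⟨b, c⟩ ⟨b', c'⟩ hne
    refine Set.disjoint_left.mpr fun y hy hy' => ?_
    have hb : b = b' := (hQ.existsUnique y).unique hy.1 hy'.1
    obtain ⟨a, ha⟩ := Function.ne_iff.mp fun hc : c = c' => hne (by rw [hb, hc])
    have h := Set.mem_iInter.mp hy.2 a
    have h' := Set.mem_iInter.mp hy'.2 a
    cases hca : c a <;> cases hca' : c' a <;> simp_all
  · refine Set.eq_univ_of_forall fun y => Set.mem_iUnion.mpr ?_
    obtain ⟨b, hb, -⟩ := hQ.existsUnique y
    refine ⟨(b, fun a => decide (y ∈ S a)), hb, Set.mem_iInter.mpr fun a => ?_⟩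
    by_cases hy : y ∈ S a <;> simp [hy]

theorem IsSymmPartition.refineBySets [Finite κ] {Q : ι → Set (NSub j → I)}
    (hQ : IsSymmPartition Q) {S : κ → Set (NSub j → I)} (hS : ∀ a, MeasurableSet (S a))
    (hSs : ∀ a, IsSymmSet (S a)) : IsSymmPartition (refineBySets Q S) := by
  refine ⟨hQ.1.refineBySets hS, fun p τ x hx => ⟨hQ.2 p.1 τ x hx.1, ?_⟩⟩
  refine IsSymmSet.iInter (fun a => ?_) τ x hx.2
  split_ifs
  exacts [hSs a, (hSs a).compl]

end Partition

section Cells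

variable {k : ℕ} (hk : 1 ≤ k) {ι ι' : Type*} {W : (PSub k → I) → ℝ}
  {Q : ι → Set (NSub (k - 1) → I)}
include hk

theorem measurable_projMiss (i : Fin k) : Measurable (projMiss hk i) :=
  measurable_pi_lambda _ fun _ => measurable_pi_apply _

theorem measurableSet_cellK (hQ : ∀ a, MeasurableSet (Q a)) (f : Fin k → ι) :
    MeasurableSet (cellK hk Q f) := by
  have : cellK hk Q f = ⋂ i, projMiss hk i ⁻¹' Q (f i) := by ext; simp [cellK]
  exact this ▸ .iInter fun i => measurable_projMiss hk i (hQ (f i))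

theorem pairwise_disjoint_cellK (hQ : IsMPartition Q) :
    Pairwise (Function.onFun Disjoint (cellK hk Q)) := by
  intro f g hfg
  obtain ⟨i, hi⟩ := Function.ne_iff.mp hfg
  refine Set.disjoint_left.mpr fun x hxf hxg => hi ?_
  exact (hQ.existsUnique (projMiss hk i x)).unique (hxf i) (hxg i)

theorem exists_mem_cellK (hQ : IsMPartition Q) (x : PSub k → I) : ∃ f, x ∈ cellK hk Q f :=
  ⟨fun i => (hQ.existsUnique (projMiss hk i x)).choose,
    fun i => (hQ.existsUnique (projMiss hk i x)).choose_spec.1⟩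

theorem cellK_subset_of_subset {Q' : ι' → Set (NSub (k - 1) → I)} {π : ι' → ι}
    (hπ : ∀ a, Q' a ⊆ Q (π a)) (f : Fin k → ι') : cellK hk Q' f ⊆ cellK hk Q (π ∘ f) :=
  fun _ hx i => hπ (f i) (hx i)

theorem integral_eq_sum_setIntegral_cellK [Fintype ι] (hQ : IsMPartition Q)
    {g : (PSub k → I) → ℝ} (hg : Integrable g) :
    ∫ x, g x = ∑ f : Fin k → ι, ∫ x in cellK hk Q f, g x := by
  have hcover : (⋃ f, cellK hk Q f) = Set.univ :=
    Set.eq_univ_of_forall fun x => Set.mem_iUnion.mpr (exists_mem_cellK hk hQ x)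
  rw [← setIntegral_univ, ← hcover, integral_iUnion (measurableSet_cellK hk hQ.1)
    (pairwise_disjoint_cellK hk hQ) hg.integrableOn, tsum_fintype]

theorem cellAvgK_mem_Icc (hWm : Measurable W) (hW : ∀ x, W x ∈ Set.Icc (0 : ℝ) 1)
    (hQ : ∀ a, MeasurableSet (Q a)) (f : Fin k → ι) :
    cellAvgK hk W Q f ∈ Set.Icc (0 : ℝ) 1 := by
  unfold cellAvgK
  split_ifs with h
  · exact ⟨le_rfl, zero_le_one⟩
  have hvol : 0 < (volume (cellK hk Q f)).toReal := ENNReal.toReal_pos h (measure_ne_top _ _)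
  have hcell := measurableSet_cellK hk hQ f
  refine ⟨div_nonneg (setIntegral_nonneg hcell fun x _ => (hW x).1) hvol.le,
    (div_le_one hvol).mpr ?_⟩
  have hWi : Integrable W := integrable_of_abs_le hWm fun x => abs_le_one_of_mem_Icc (hW x)
  calc ∫ x in cellK hk Q f, W x ≤ ∫ _ in cellK hk Q f, (1 : ℝ) :=
        setIntegral_mono_on hWi.integrableOn (integrable_const 1).integrableOn hcell
          fun x _ => (hW x).2
    _ = (volume (cellK hk Q f)).toReal := by simp [measureReal_def]

end Cells

section Stepping

variable {k : ℕ} (hk : 1 ≤ k) {ι ι' : Type*} [Fintype ι] [DecidableEq ι]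
  {W : (PSub k → I) → ℝ} {Q : ι → Set (NSub (k - 1) → I)}
include hk

theorem measurable_stepK (hQ : ∀ a, MeasurableSet (Q a)) : Measurable (stepK hk W Q) :=
  Finset.measurable_sum _ fun f _ => measurable_const.indicator (measurableSet_cellK hk hQ f)

theorem integrable_stepK (hQ : ∀ a, MeasurableSet (Q a)) : Integrable (stepK hk W Q) :=
  integrable_finsetSum _ fun f _ => (integrable_const _).indicator (measurableSet_cellK hk hQ f)

theorem stepK_eq_cellAvgK (hQ : IsMPartition Q) {f : Fin k → ι} {x : PSub k → I}
    (hx : x ∈ cellK hk Q f) : stepK hk W Q x = cellAvgK hk W Q f := by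
  refine (Finset.sum_eq_single f (fun g _ hgf => ?_) (by simp)).trans (Set.indicator_of_mem hx _)
  exact Set.indicator_of_notMem (Set.disjoint_left.mp (pairwise_disjoint_cellK hk hQ hgf.symm) hx) _

theorem stepK_mem_Icc (hWm : Measurable W) (hW : ∀ x, W x ∈ Set.Icc (0 : ℝ) 1)
    (hQ : IsMPartition Q) (x : PSub k → I) : stepK hk W Q x ∈ Set.Icc (0 : ℝ) 1 := by
  obtain ⟨f, hf⟩ := exists_mem_cellK hk hQ x
  exact stepK_eq_cellAvgK hk hQ hf ▸ cellAvgK_mem_Icc hk hWm hW hQ.1 f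

/-- No integrability is needed: on a cell where `W` is not integrable both sides are `0`. -/
theorem setIntegral_stepK (hQ : IsMPartition Q) (f : Fin k → ι) :
    ∫ x in cellK hk Q f, stepK hk W Q x = ∫ x in cellK hk Q f, W x := by
  rw [setIntegral_congr_fun (measurableSet_cellK hk hQ.1 f) fun x hx =>
    stepK_eq_cellAvgK hk hQ hx, setIntegral_const, smul_eq_mul, cellAvgK, measureReal_def]
  split_ifs with h
  · rw [Measure.restrict_eq_zero.mpr h, integral_zero_measure, mul_zero]
  · exact mul_div_cancel₀ _ (ENNReal.toReal_pos h (measure_ne_top _ _)).ne'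

theorem integrable_stepK_mul (hQ : ∀ a, MeasurableSet (Q a)) {g : (PSub k → I) → ℝ}
    (hg : Measurable g) {C : ℝ} (hgC : ∀ x, |g x| ≤ C) :
    Integrable fun x => stepK hk W Q x * g x :=
  (integrable_stepK hk hQ).mul_bdd hg.aestronglyMeasurable (Filter.Eventually.of_forall hgC)

/-- `W_Q` is the conditional expectation of `W` given the cells of `Q`. -/
theorem integral_stepK_mul (hW : Integrable W) (hQ : IsMPartition Q)
    {g : (PSub k → I) → ℝ} (hg : Measurable g) {C : ℝ} (hgC : ∀ x, |g x| ≤ C)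
    (hgc : ∀ f, ∃ c, ∀ x ∈ cellK hk Q f, g x = c) :
    ∫ x, stepK hk W Q x * g x = ∫ x, W x * g x := by
  rw [integral_eq_sum_setIntegral_cellK hk hQ (integrable_stepK_mul hk hQ.1 hg hgC),
    integral_eq_sum_setIntegral_cellK hk hQ
      (hW.mul_bdd hg.aestronglyMeasurable (Filter.Eventually.of_forall hgC))]
  refine Finset.sum_congr rfl fun f _ => ?_
  obtain ⟨c, hc⟩ := hgc f
  have hmul_c : ∀ F : (PSub k → I) → ℝ,
      ∫ x in cellK hk Q f, F x * g x = (∫ x in cellK hk Q f, F x) * c := fun F => by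
    rw [← integral_mul_const]
    exact setIntegral_congr_fun (measurableSet_cellK hk hQ.1 f) fun x hx => by rw [hc x hx]
  rw [hmul_c, hmul_c, setIntegral_stepK hk hQ]

theorem stepK_comp_equiv (W : (PSub k → I) → ℝ) (Q : ι → Set (NSub (k - 1) → I))
    [Fintype ι'] [DecidableEq ι'] (e : ι' ≃ ι) : stepK hk W (Q ∘ e) = stepK hk W Q := by
  funext x
  exact Fintype.sum_equiv (Equiv.piCongrRight fun _ => e) _ _ fun f => rfl

end Stepping

def energyK {k : ℕ} (hk : 1 ≤ k) {ι : Type*} [Fintype ι] [DecidableEq ι]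
    (W : (PSub k → I) → ℝ) (Q : ι → Set (NSub (k - 1) → I)) : ℝ :=
  ∫ x, stepK hk W Q x ^ 2

section Energy

variable {k : ℕ} (hk : 1 ≤ k) {ι ι' : Type*} [Fintype ι] [DecidableEq ι] [Fintype ι']
  [DecidableEq ι'] {W : (PSub k → I) → ℝ} {P : ι → Set (NSub (k - 1) → I)}
include hk

theorem energyK_comp_equiv (e : ι' ≃ ι) : energyK hk W (P ∘ e) = energyK hk W P := by
  rw [energyK, stepK_comp_equiv, energyK]

theorem energyK_nonneg : 0 ≤ energyK hk W P :=
  integral_nonneg fun _ => sq_nonneg _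

theorem energyK_le_one (hWm : Measurable W) (hW : ∀ x, W x ∈ Set.Icc (0 : ℝ) 1)
    (hP : IsMPartition P) : energyK hk W P ≤ 1 := by
  refine (integral_mono_of_nonneg (Filter.Eventually.of_forall fun x => sq_nonneg _)
    (integrable_const 1) (Filter.Eventually.of_forall fun x => ?_)).trans (by simp)
  obtain ⟨h0, h1⟩ := stepK_mem_Icc hk hWm hW hP x
  exact pow_le_one₀ h0 h1

/-- Pythagoras for a refinement `P'` of `P`: since `W_P` is constant on the cells of both `P` and
`P'`, `∫ W_{P'} W_P = ∫ W W_P = ∫ W_P²`. -/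
theorem integral_sq_stepK_sub_stepK (hWm : Measurable W) (hW : ∀ x, W x ∈ Set.Icc (0 : ℝ) 1)
    (hP : IsMPartition P) {P' : ι' → Set (NSub (k - 1) → I)} (hP' : IsMPartition P')
    {π : ι' → ι} (hπ : ∀ a, P' a ⊆ P (π a)) :
    ∫ x, (stepK hk W P' x - stepK hk W P x) ^ 2 = energyK hk W P' - energyK hk W P := by
  set a := stepK hk W P
  set b := stepK hk W P'
  have hWi : Integrable W := integrable_of_abs_le hWm fun x => abs_le_one_of_mem_Icc (hW x)
  have ham : Measurable a := measurable_stepK hk hP.1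
  have ha1 : ∀ x, |a x| ≤ 1 := fun x => abs_le_one_of_mem_Icc (stepK_mem_Icc hk hWm hW hP x)
  have hb1 : ∀ x, |b x| ≤ 1 := fun x => abs_le_one_of_mem_Icc (stepK_mem_Icc hk hWm hW hP' x)
  have hab : ∫ x, b x * a x = ∫ x, a x * a x := by
    rw [integral_stepK_mul hk hWi hP' ham ha1 fun f =>
        ⟨_, fun x hx => stepK_eq_cellAvgK hk hP (cellK_subset_of_subset hk hπ f hx)⟩,
      integral_stepK_mul hk hWi hP ham ha1 fun f => ⟨_, fun x hx => stepK_eq_cellAvgK hk hP hx⟩]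
  have hbb : Integrable fun x => b x * b x :=
    integrable_stepK_mul hk hP'.1 (measurable_stepK hk hP'.1) hb1
  have haa : Integrable fun x => a x * a x := integrable_stepK_mul hk hP.1 ham ha1
  have hba : Integrable fun x => b x * a x := integrable_stepK_mul hk hP'.1 ham ha1
  calc ∫ x, (b x - a x) ^ 2
      = ∫ x, (b x * b x - a x * a x - 2 * (b x * a x - a x * a x)) := by
        congr 1 with x
        ring
    _ = (∫ x, b x * b x) - (∫ x, a x * a x) - 2 * ((∫ x, b x * a x) - ∫ x, a x * a x) := by
        rw [integral_sub (f := fun x => b x * b x - a x * a x)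
            (g := fun x => 2 * (b x * a x - a x * a x)) (hbb.sub haa) ((hba.sub haa).const_mul 2),
          integral_sub (f := fun x => b x * b x) (g := fun x => a x * a x) hbb haa,
          integral_const_mul,
          integral_sub (f := fun x => b x * a x) (g := fun x => a x * a x) hba haa]
    _ = energyK hk W P' - energyK hk W P := by
        rw [hab, energyK, energyK]
        simp only [sq]
        ring

theorem energyK_le_of_subset (hWm : Measurable W) (hW : ∀ x, W x ∈ Set.Icc (0 : ℝ) 1)
    (hP : IsMPartition P) {P' : ι' → Set (NSub (k - 1) → I)} (hP' : IsMPartition P')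
    {π : ι' → ι} (hπ : ∀ a, P' a ⊆ P (π a)) : energyK hk W P ≤ energyK hk W P' := by
  rw [← sub_nonneg, ← integral_sq_stepK_sub_stepK hk hWm hW hP hP' hπ]
  exact integral_nonneg fun _ => sq_nonneg _

end Energy

def cylinderIndicator {k : ℕ} (hk : 1 ≤ k) (S : Fin k → Set (NSub (k - 1) → I))
    (x : PSub k → I) : ℝ :=
  ∏ j, (S j).indicator (fun _ => (1 : ℝ)) (projMiss hk j x)

section Cylinder

variable {k : ℕ} (hk : 1 ≤ k) {S : Fin k → Set (NSub (k - 1) → I)}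
include hk

theorem measurable_cylinderIndicator (hS : ∀ j, MeasurableSet (S j)) :
    Measurable (cylinderIndicator hk S) :=
  Finset.measurable_prod _ fun j _ =>
    (measurable_const.indicator (hS j)).comp (measurable_projMiss hk j)

theorem cylinderIndicator_mem_Icc (x : PSub k → I) :
    cylinderIndicator hk S x ∈ Set.Icc (0 : ℝ) 1 :=
  ⟨Finset.prod_nonneg fun _ _ => Set.indicator_nonneg (fun _ _ => zero_le_one) _,
    Finset.prod_le_one (fun _ _ => Set.indicator_nonneg (fun _ _ => zero_le_one) _)
      fun _ _ => Set.indicator_le_self' (fun _ _ => zero_le_one) _⟩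

theorem cylinderIndicator_eq_of_mem_cellK {ι : Type*} {P : ι → Set (NSub (k - 1) → I)}
    {f : Fin k → ι × (Fin k → Bool)} {x : PSub k → I}
    (hx : x ∈ cellK hk (refineBySets P S) f) :
    cylinderIndicator hk S x = ∏ j, if (f j).2 j then 1 else 0 :=
  Finset.prod_congr rfl fun j _ => indicator_one_eq_of_mem_refineBySets (hx j) j

end Cylinder

section Increment

variable {k : ℕ} (hk : 1 ≤ k) {ι : Type*} [Fintype ι] [DecidableEq ι]
  {W : (PSub k → I) → ℝ} {P : ι → Set (NSub (k - 1) → I)} {S : Fin k → Set (NSub (k - 1) → I)}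
include hk

/-- The cylinder is constant on the cells of `P' = refineBySets P S`, so its correlation with
`W - W_P` equals that with `W_{P'} - W_P`, whose square Cauchy–Schwarz bounds by the energy gain
`∫ (W_{P'} - W_P)²`. -/
theorem energyK_add_sq_lt_energyK_refineBySets (hWm : Measurable W)
    (hW : ∀ x, W x ∈ Set.Icc (0 : ℝ) 1) (hP : IsMPartition P) (hS : ∀ j, MeasurableSet (S j))
    {ε : ℝ} (hε : 0 ≤ ε) (hgap : ε < |∫ x, (W x - stepK hk W P x) * cylinderIndicator hk S x|) :
    energyK hk W P + ε ^ 2 < energyK hk W (refineBySets P S) := by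
  have hP' := hP.refineBySets hS
  set a := stepK hk W P
  set b := stepK hk W (refineBySets P S)
  set g := cylinderIndicator hk S
  have hWi : Integrable W := integrable_of_abs_le hWm fun x => abs_le_one_of_mem_Icc (hW x)
  have hgm : Measurable g := measurable_cylinderIndicator hk hS
  have hg1 : ∀ x, |g x| ≤ 1 := fun x => abs_le_one_of_mem_Icc (cylinderIndicator_mem_Icc hk x)
  have hsplit : ∫ x, (W x - a x) * g x = ∫ x, (b x - a x) * g x := by
    simp_rw [sub_mul]
    rw [integral_sub (hWi.mul_bdd hgm.aestronglyMeasurable (Filter.Eventually.of_forall hg1))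
        (integrable_stepK_mul hk hP.1 hgm hg1),
      integral_sub (integrable_stepK_mul hk hP'.1 hgm hg1) (integrable_stepK_mul hk hP.1 hgm hg1),
      integral_stepK_mul hk hWi hP' hgm hg1 fun f =>
        ⟨_, fun x hx => cylinderIndicator_eq_of_mem_cellK hk hx⟩]
  have hbam : Measurable fun x => b x - a x :=
    (measurable_stepK hk hP'.1).sub (measurable_stepK hk hP.1)
  have hba : ∀ x, |b x - a x| ≤ 1 := fun x => by
    simpa [Real.dist_eq] using Real.dist_le_of_mem_Icc_01 (stepK_mem_Icc hk hWm hW hP' x)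
      (stepK_mem_Icc hk hWm hW hP x)
  have hCS := sq_integral_mul_le_integral_sq (μ := volume) (integrable_of_abs_le hbam hba)
    (integrable_of_abs_le (hbam.pow_const 2) fun x => by
      rw [abs_pow]
      exact pow_le_one₀ (abs_nonneg _) (hba x)) hgm.aestronglyMeasurable hg1
  have hgap2 := pow_lt_pow_left₀ hgap hε two_ne_zero
  rw [sq_abs, hsplit] at hgap2
  linarith [integral_sq_stepK_sub_stepK hk hWm hW hP hP' (refineBySets_subset P S)]

end Increment

section LevelSets

theorem integral_indicator_coe_lt {c : ℝ} (hc : c ∈ Set.Icc (0 : ℝ) 1) :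
    ∫ t : I, {s : I | (s : ℝ) < c}.indicator (fun _ => (1 : ℝ)) t = c := by
  have hIio : {s : I | (s : ℝ) < c} = Set.Iio ⟨c, hc⟩ := rfl
  rw [hIio, integral_indicator_const _ measurableSet_Iio, measureReal_def,
    unitInterval.volume_Iio, smul_eq_mul, mul_one, ENNReal.toReal_ofReal hc.1]

theorem prod_eq_integral_prod_indicator {κ : Type*} [Fintype κ] {c : κ → ℝ}
    (hc : ∀ a, c a ∈ Set.Icc (0 : ℝ) 1) :
    ∏ a, c a = ∫ t : κ → I, ∏ a, {s : I | (s : ℝ) < c a}.indicator (fun _ => (1 : ℝ)) (t a) := by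
  rw [volume_pi, integral_fintype_prod_eq_prod]
  exact Finset.prod_congr rfl fun a _ => (integral_indicator_coe_lt (hc a)).symm

variable {k : ℕ} (hk : 1 ≤ k)
include hk

/-- Layer-cake rounding: writing `u j y = ∫ t, 1[t < u j y]` and exchanging the order of
integration, the integral against `∏ j, u j` is an average of integrals against the cylinder
indicators of the symmetric level sets `{y | t j < u j y}`. -/
theorem abs_integral_mul_prod_le_of_forall_cylinderIndicator {D : (PSub k → I) → ℝ}
    (hD : Integrable D) {ε : ℝ}
    (h : ∀ S : Fin k → Set (NSub (k - 1) → I), (∀ j, MeasurableSet (S j)) →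
      (∀ j, IsSymmSet (S j)) → |∫ x, D x * cylinderIndicator hk S x| ≤ ε)
    {u : Fin k → (NSub (k - 1) → I) → ℝ} (hum : ∀ j, Measurable (u j))
    (hus : ∀ j, IsSymmetricFn (u j)) (hub : ∀ j y, u j y ∈ Set.Icc (0 : ℝ) 1) :
    |∫ x, D x * ∏ j, u j (projMiss hk j x)| ≤ ε := by
  set lev : (Fin k → I) → Fin k → Set (NSub (k - 1) → I) := fun t j => {y | (t j : ℝ) < u j y}
  have hlev : ∀ t x j, (lev t j).indicator (fun _ => (1 : ℝ)) (projMiss hk j x) =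
      if (t j : ℝ) < u j (projMiss hk j x) then 1 else 0 := fun t x j => by
    simp only [Set.indicator_apply, lev, Set.mem_ofPred_eq]
  set G : (PSub k → I) × (Fin k → I) → ℝ := fun z => D z.1 * cylinderIndicator hk (lev z.2) z.1
  have hGi : Integrable G (volume.prod volume) := by
    refine (hD.comp_fst volume).mul_bdd (c := 1) ?_ (Filter.Eventually.of_forall fun z => ?_)
    · simp_rw [cylinderIndicator, hlev]
      exact (Finset.measurable_prod _ fun j _ => Measurable.ite
        (measurableSet_lt (by fun_prop) ((hum j).comp ((measurable_projMiss hk j).comp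
          measurable_fst))) measurable_const measurable_const).aestronglyMeasurable
    · simp_rw [cylinderIndicator, hlev, Real.norm_eq_abs, Finset.abs_prod]
      exact Finset.prod_le_one (fun _ _ => abs_nonneg _) fun j _ => by split_ifs <;> simp
  have hpoint : ∀ x, D x * ∏ j, u j (projMiss hk j x) = ∫ t, G (x, t) := fun x => by
    simp only [G, cylinderIndicator, hlev, ← integral_const_mul, Set.indicator_apply,
      Set.mem_ofPred_eq, prod_eq_integral_prod_indicator fun j => hub j (projMiss hk j x)]
  have hbound : ∀ t, ‖∫ x, G (x, t)‖ ≤ ε := fun t =>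
    h (lev t) (fun j => measurableSet_lt measurable_const (hum j)) fun j τ y hy => by
      simpa only [lev, Set.mem_ofPred_eq, hus j τ y] using hy
  calc |∫ x, D x * ∏ j, u j (projMiss hk j x)| = ‖∫ t, ∫ x, G (x, t)‖ := by
        simp_rw [hpoint]
        rw [integral_integral_swap hGi, Real.norm_eq_abs]
    _ ≤ ε := by
        simpa using norm_integral_le_of_norm_le_const (μ := volume)
          (Filter.Eventually.of_forall hbound)

theorem cutNormK_le_of_forall_cylinderIndicator {D : (PSub k → I) → ℝ} (hD : Integrable D) {ε : ℝ}
    (hε : 0 ≤ ε) (h : ∀ S : Fin k → Set (NSub (k - 1) → I), (∀ j, MeasurableSet (S j)) →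
      (∀ j, IsSymmSet (S j)) → |∫ x, D x * cylinderIndicator hk S x| ≤ ε) :
    cutNormK hk D ≤ ε :=
  Real.sSup_le (fun _ ⟨_, hum, hus, hub, hr⟩ =>
    hr ▸ abs_integral_mul_prod_le_of_forall_cylinderIndicator hk hD h hum hus hub) hε

end LevelSets

def prodPiFinSuccEquiv (A B : Type*) (T : ℕ) :
    A × (Fin (T + 1) → B) ≃ (A × (Fin T → B)) × B :=
  (Equiv.prodCongr (Equiv.refl A) ((Fin.snocEquiv fun _ => B).symm.trans
    (Equiv.prodComm _ _))).trans (Equiv.prodAssoc _ _ _).symm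

section Iteration

variable {k m : ℕ} (hk : 1 ≤ k) {ε : ℝ} {W : Fin m → (PSub k → I) → ℝ}
  {A : Type*} [Fintype A] [DecidableEq A]
include hk

theorem sum_energyK_le (hW : ∀ i, IsHypergraphon (W i)) {ι : Type*} [Fintype ι] [DecidableEq ι]
    {P : ι → Set (NSub (k - 1) → I)} (hP : IsMPartition P) :
    ∑ i, energyK hk (W i) P ≤ m := by
  simpa using Finset.sum_le_sum (s := Finset.univ) fun i _ =>
    energyK_le_one hk (hW i).1 (hW i).2.2 hP

theorem exists_sum_energyK_refineBySets_gt (hW : ∀ i, IsHypergraphon (W i)) {ι : Type*}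
    [Fintype ι] [DecidableEq ι] {P : ι → Set (NSub (k - 1) → I)} (hP : IsMPartition P)
    (hε : 0 ≤ ε) {i₀ : Fin m} (h : ε < cutNormK hk fun x => W i₀ x - stepK hk (W i₀) P x) :
    ∃ S : Fin k → Set (NSub (k - 1) → I), (∀ j, MeasurableSet (S j)) ∧
      (∀ j, IsSymmSet (S j)) ∧
      ∑ i, energyK hk (W i) P + ε ^ 2 < ∑ i, energyK hk (W i) (refineBySets P S) := by
  obtain ⟨S, hSm, hSs, hgap⟩ : ∃ S : Fin k → Set (NSub (k - 1) → I),
      (∀ j, MeasurableSet (S j)) ∧ (∀ j, IsSymmSet (S j)) ∧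
      ε < |∫ x, (W i₀ x - stepK hk (W i₀) P x) * cylinderIndicator hk S x| := by
    by_contra! hS
    have hWi : Integrable (W i₀) :=
      integrable_of_abs_le (hW i₀).1 fun x => abs_le_one_of_mem_Icc ((hW i₀).2.2 x)
    exact h.not_ge (cutNormK_le_of_forall_cylinderIndicator hk
      (hWi.sub (integrable_stepK hk hP.1)) hε hS)
  refine ⟨S, hSm, hSs, ?_⟩
  have hP' := hP.refineBySets hSm
  have hinc := energyK_add_sq_lt_energyK_refineBySets hk (hW i₀).1 (hW i₀).2.2 hP hSm hε hgap
  have hsingle := Finset.single_le_sum (f := fun i =>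
      energyK hk (W i) (refineBySets P S) - energyK hk (W i) P)
    (fun i _ => sub_nonneg.mpr (energyK_le_of_subset hk (hW i).1 (hW i).2.2 hP hP'
      (refineBySets_subset P S))) (Finset.mem_univ i₀)
  rw [Finset.sum_sub_distrib] at hsingle
  linarith

/-- Each refinement step raises the total energy, which never exceeds `m`, by more than `ε²`;
`n` bounds the number of steps still to be taken. -/
theorem exists_regular_refinement_of_lt (hW : ∀ i, IsHypergraphon (W i)) (hε : 0 < ε)
    (Q : A → Set (NSub (k - 1) → I)) (n : ℕ) (T : ℕ)
    (P : A × (Fin T → Fin k → Bool) → Set (NSub (k - 1) → I)) (hP : IsSymmPartition P)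
    (hPQ : ∀ p, P p ⊆ Q p.1) (hT : (T : ℝ) * ε ^ 2 ≤ ∑ i, energyK hk (W i) P)
    (hn : (m : ℝ) < (T + n) * ε ^ 2) :
    ∃ (T' : ℕ) (P' : A × (Fin T' → Fin k → Bool) → Set (NSub (k - 1) → I)),
      IsSymmPartition P' ∧ (∀ p, P' p ⊆ Q p.1) ∧ (T' : ℝ) * ε ^ 2 ≤ m ∧
      ∀ i, cutNormK hk (fun x => W i x - stepK hk (W i) P' x) ≤ ε := by
  induction n generalizing T with
  | zero =>
    have := sum_energyK_le hk hW hP.1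
    push_cast at hn
    linarith
  | succ n ih =>
    by_cases hreg : ∀ i, cutNormK hk (fun x => W i x - stepK hk (W i) P x) ≤ ε
    · exact ⟨T, P, hP, hPQ, hT.trans (sum_energyK_le hk hW hP.1), hreg⟩
    push Not at hreg
    obtain ⟨i₀, hi₀⟩ := hreg
    obtain ⟨S, hSm, hSs, hE⟩ := exists_sum_energyK_refineBySets_gt hk hW hP.1 hε.le hi₀
    set e := prodPiFinSuccEquiv A (Fin k → Bool) T
    refine ih (T + 1) (refineBySets P S ∘ e) ((hP.refineBySets hSm hSs).comp_equiv e)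
      (fun p => (refineBySets_subset P S (e p)).trans (hPQ _)) ?_ ?_
    · simp only [energyK_comp_equiv]
      push_cast
      linarith
    · push_cast at hn ⊢
      linarith

theorem exists_regular_refinement (hW : ∀ i, IsHypergraphon (W i)) (hε : 0 < ε)
    {Q : A → Set (NSub (k - 1) → I)} (hQ : IsSymmPartition Q) :
    ∃ (T : ℕ) (P : A × (Fin T → Fin k → Bool) → Set (NSub (k - 1) → I)),
      IsSymmPartition P ∧ (∀ p, P p ⊆ Q p.1) ∧ (T : ℝ) * ε ^ 2 ≤ m ∧
      ∀ i, cutNormK hk (fun x => W i x - stepK hk (W i) P x) ≤ ε := by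
  set e := Equiv.prodUnique A (Fin 0 → Fin k → Bool)
  refine exists_regular_refinement_of_lt hk hW hε Q (⌊(m : ℝ) / ε ^ 2⌋₊ + 1) 0 (Q ∘ e)
    (hQ.comp_equiv e) (fun _ => subset_rfl) ?_ ?_
  · simpa using Finset.sum_nonneg fun i _ => energyK_nonneg hk
  · rw [Nat.cast_zero, zero_add, ← div_lt_iff₀ (by positivity)]
    exact_mod_cast Nat.lt_floor_add_one _

end Iteration

theorem two_pow_pow_le_ceil_rpow {k m T : ℕ} {ε : ℝ} (hε : 0 < ε) (hT : (T : ℝ) * ε ^ 2 ≤ m) :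
    ((2 ^ k) ^ T : ℝ) ≤ ⌈(2 : ℝ) ^ ((k * m : ℝ) / ε ^ 2)⌉₊ := by
  have hexp : ((k * T : ℕ) : ℝ) ≤ (k * m : ℝ) / ε ^ 2 := by
    rw [le_div_iff₀ (by positivity), Nat.cast_mul, mul_assoc]
    exact mul_le_mul_of_nonneg_left hT k.cast_nonneg
  calc ((2 ^ k) ^ T : ℝ) = (2 : ℝ) ^ ((k * T : ℕ) : ℝ) := by
        rw [Real.rpow_natCast, pow_mul]
    _ ≤ (2 : ℝ) ^ ((k * m : ℝ) / ε ^ 2) := Real.rpow_le_rpow_of_exponent_le one_le_two hexp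
    _ ≤ ⌈(2 : ℝ) ^ ((k * m : ℝ) / ε ^ 2)⌉₊ := Nat.le_ceil _

/-- Weak regularity lemma for tuples of hypergraphons: given `k ≥ 2`,
`ε > 0`, hypergraphons `W_1,…,W_m` and a symmetric partition `Q` of `[0,1]^{r[k-1]}`,
there is a symmetric partition `Q'` refining `Q`, each part of `Q` split into at most
`⌈2^(km/ε²)⌉` parts, with `‖W_i − (W_i)_{Q'}‖_{□^{k-1}} ≤ ε` for all `i`. -/
theorem weak_regularity_tuples {k m q : ℕ} (hk : 2 ≤ k) (ε : ℝ) (hε : 0 < ε)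
    (W : Fin m → ((PSub k → I) → ℝ)) (hW : ∀ i, IsHypergraphon (W i))
    (Q : Fin q → Set (NSub (k - 1) → I)) (hQ : IsSymmPartition Q) :
    ∃ (r : ℕ) (Q' : Fin q × Fin r → Set (NSub (k - 1) → I)),
      (r : ℝ) ≤ ⌈(2 : ℝ) ^ ((k * m : ℝ) / ε ^ 2)⌉₊ ∧
      IsSymmPartition Q' ∧ (∀ p : Fin q × Fin r, Q' p ⊆ Q p.1) ∧
      ∀ i, cutNormK (by omega : 1 ≤ k)
        (fun x => W i x - stepK (by omega : 1 ≤ k) (W i) Q' x) ≤ ε := by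
  have hk1 : 1 ≤ k := by omega
  obtain ⟨T, P, hP, hPQ, hT, hreg⟩ := exists_regular_refinement hk1 hW hε hQ
  let e : Fin q × Fin (Fintype.card (Fin T → Fin k → Bool)) ≃ Fin q × (Fin T → Fin k → Bool) :=
    Equiv.prodCongr (Equiv.refl _) (Fintype.equivFin _).symm
  refine ⟨_, P ∘ e, ?_, hP.comp_equiv e, fun p => hPQ (e p), fun i => ?_⟩
  · simpa using two_pow_pow_le_ceil_rpow hε hT
  · rw [stepK_comp_equiv]
    exact hreg i

end
end
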